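/- arXiv:math/0702566 — 8 statements merged into one kernel-verified Lean document; each statement's English description precedes it below -/
import Mathlib

section
/- For p=2 and any integers 0 ≤ i ≤ λ₂, the 2×2 determinant C(λ₁-i, μ₁-i)·C(λ₂, μ₂+i) - C(λ₁-i, μ₂-1-i)·C(λ₂, μ₁+1+i) is nonnegative. -/
/-- Binomial coefficient on integers, equal to `0` when `k < 0` or `k > n`. -/
def ichoose (n k : ℤ) : ℤ :=
  if 0 ≤ k ∧ k ≤ n then (Nat.choose n.toNat k.toNat : ℤ) else 0

lemma ichoose_nonneg (n k : ℤ) : 0 ≤ ichoose n k := by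
  unfold ichoose; split <;> positivity

lemma one_step (a b k l : ℕ) (hk : k + 1 ≤ a) (hl : l + 1 ≤ b)
    (hkl : k ≤ l) (hab : b - l ≤ a - k) :
    Nat.choose a k * Nat.choose b (l+1) ≤ Nat.choose a (k+1) * Nat.choose b l := by
  have h1 := Nat.choose_succ_right_eq a k
  have h2 := Nat.choose_succ_right_eq b l
  have hpos : 0 < (k+1) * (l+1) := by positivity
  have key : Nat.choose a k * Nat.choose b (l+1) * ((k+1) * (l+1))
      ≤ Nat.choose a (k+1) * Nat.choose b l * ((k+1) * (l+1)) := by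
    have e1 : Nat.choose a k * Nat.choose b (l+1) * ((k+1) * (l+1))
        = Nat.choose a k * (Nat.choose b (l+1) * (l+1)) * (k+1) := by ring
    have e2 : Nat.choose a (k+1) * Nat.choose b l * ((k+1) * (l+1))
        = (Nat.choose a (k+1) * (k+1)) * (Nat.choose b l * (l+1)) := by ring
    rw [e1, e2, h1, h2]
    have : (b - l) * (k+1) ≤ (a - k) * (l+1) :=
      Nat.mul_le_mul hab (by omega)
    calc Nat.choose a k * (Nat.choose b l * (b - l)) * (k + 1)
        = Nat.choose a k * Nat.choose b l * ((b - l) * (k+1)) := by ring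
      _ ≤ Nat.choose a k * Nat.choose b l * ((a - k) * (l+1)) :=
          Nat.mul_le_mul_left _ this
      _ = Nat.choose a k * (a - k) * (Nat.choose b l * (l + 1)) := by ring
  exact Nat.le_of_mul_le_mul_right key hpos

lemma chain (a b s t d : ℕ) (hs : s + d ≤ a) (ht : t + d ≤ b)
    (hst : s ≤ t) (hab : b - t ≤ a - s) :
    Nat.choose a s * Nat.choose b (t+d) ≤ Nat.choose a (s+d) * Nat.choose b t := by
  induction d with
  | zero => simp
  | succ d ih =>
    have ih' := ih (by omega) (by omega)
    have os := one_step a b (s+d) (t+d) (by omega) (by omega) (by omega) (by omega)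
    have hpos : 0 < Nat.choose b (t+d) := Nat.choose_pos (by omega)
    have key : Nat.choose a s * Nat.choose b (t+d+1) * Nat.choose b (t+d)
        ≤ Nat.choose a (s+d+1) * Nat.choose b t * Nat.choose b (t+d) := by
      calc Nat.choose a s * Nat.choose b (t+d+1) * Nat.choose b (t+d)
          = Nat.choose b (t+d+1) * (Nat.choose a s * Nat.choose b (t+d)) := by ring
        _ ≤ Nat.choose b (t+d+1) * (Nat.choose a (s+d) * Nat.choose b t) :=
            Nat.mul_le_mul_left _ ih'
        _ = Nat.choose b t * (Nat.choose a (s+d) * Nat.choose b (t+d+1)) := by ring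
        _ ≤ Nat.choose b t * (Nat.choose a (s+d+1) * Nat.choose b (t+d)) :=
            Nat.mul_le_mul_left _ os
        _ = Nat.choose a (s+d+1) * Nat.choose b t * Nat.choose b (t+d) := by ring
    exact Nat.le_of_mul_le_mul_right key hpos

theorem det2_nonneg (lam1 lam2 mu1 mu2 i : ℤ)
    (hlam : lam2 ≤ lam1) (hlam0 : 0 ≤ lam2)
    (hmu : mu2 ≤ mu1) (hmu0 : 0 ≤ mu2)
    (hi0 : 0 ≤ i) (hi : i ≤ lam2) :
    0 ≤ ichoose (lam1 - i) (mu1 - i) * ichoose lam2 (mu2 + i) -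
        ichoose (lam1 - i) (mu2 - 1 - i) * ichoose lam2 (mu1 + 1 + i) := by
  by_cases h2 : (0 ≤ mu2 - 1 - i ∧ mu2 - 1 - i ≤ lam1 - i) ∧
      (0 ≤ mu1 + 1 + i ∧ mu1 + 1 + i ≤ lam2)
  · obtain ⟨⟨h2a, h2b⟩, h2c, h2d⟩ := h2
    -- all four binomials are in range
    have r1 : 0 ≤ mu1 - i ∧ mu1 - i ≤ lam1 - i := by omega
    have r2 : 0 ≤ mu2 + i ∧ mu2 + i ≤ lam2 := by omega
    have r3 : 0 ≤ mu2 - 1 - i ∧ mu2 - 1 - i ≤ lam1 - i := ⟨h2a, h2b⟩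
    have r4 : 0 ≤ mu1 + 1 + i ∧ mu1 + 1 + i ≤ lam2 := ⟨h2c, h2d⟩
    rw [ichoose, ichoose, ichoose, ichoose, if_pos r1, if_pos r2, if_pos r3, if_pos r4]
    rw [sub_nonneg]
    set a := (lam1 - i).toNat
    set b := lam2.toNat
    set s := (mu2 - 1 - i).toNat
    set t := (mu2 + i).toNat
    set d := (mu1 - mu2 + 1).toNat
    have e1 : (mu1 - i).toNat = s + d := by omega
    have e2 : (mu1 + 1 + i).toNat = t + d := by omega
    rw [e1, e2]
    have h := chain a b s t d (by omega) (by omega) (by omega) (by omega)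
    exact_mod_cast h
  · have hz : ichoose (lam1 - i) (mu2 - 1 - i) * ichoose lam2 (mu1 + 1 + i) = 0 := by
      rcases not_and_or.mp h2 with h | h
      · have : ichoose (lam1 - i) (mu2 - 1 - i) = 0 := by rw [ichoose, if_neg h]
        rw [this, zero_mul]
      · have : ichoose lam2 (mu1 + 1 + i) = 0 := by rw [ichoose, if_neg h]
        rw [this, mul_zero]
    rw [hz, sub_zero]
    exact mul_nonneg (ichoose_nonneg _ _) (ichoose_nonneg _ _)
end

section
/- For a triangular sequence s = (a_{ij}) with respect to λ, the point A₁(s) is strictly North and strictly East of A_p(s); that is, both coordinates of A₁(s) strictly exceed the corresponding coordinates of A_p(s). -/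
theorem A1_strictly_NE_Ap
    (p : ℕ) (hp : 2 ≤ p)
    (lam : ℕ → ℤ) (hlam : ∀ j, 1 ≤ j → j < p → lam (j + 1) ≤ lam j)
    (hlam0 : 0 ≤ lam p)
    (a : ℕ → ℕ → ℤ)
    (ha0 : ∀ i j, 1 ≤ j → j ≤ i → i ≤ p - 1 → 0 ≤ a i j)
    (habd : ∀ i j, 1 ≤ j → j ≤ i → i ≤ p - 1 → a i j ≤ lam (j + 1))
    (hcol : ∀ j i, 1 ≤ j → 1 ≤ i → j + i ≤ p - 1 →
      (∑ t ∈ Finset.Icc (j + 1) (j + i), a t j) ≤ a j j) :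
    (1 + ∑ s ∈ Finset.Icc 1 (p - 1),
        ((∑ t ∈ Finset.Icc (s + 1) (p - 1), a t s) - a s s) <
      (p : ℤ) + a 1 1) ∧
    (lam p + (1 + ∑ s ∈ Finset.Icc 1 (p - 1),
        ((∑ t ∈ Finset.Icc (s + 1) (p - 1), a t s) - a s s)) <
      lam 1 + (p : ℤ)) := by
  have hsum : (∑ s ∈ Finset.Icc 1 (p - 1),
      ((∑ t ∈ Finset.Icc (s + 1) (p - 1), a t s) - a s s)) ≤ 0 := by
    apply Finset.sum_nonpos
    intro s hs
    rw [Finset.mem_Icc] at hs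
    obtain ⟨hs1, hs2⟩ := hs
    rcases eq_or_lt_of_le hs2 with h | h
    · have : Finset.Icc (s + 1) (p - 1) = ∅ := by
        apply Finset.Icc_eq_empty
        omega
      rw [this, Finset.sum_empty]
      have := ha0 s s hs1 le_rfl hs2
      linarith
    · have hi : 1 ≤ p - 1 - s := by omega
      have hcol' := hcol s (p - 1 - s) hs1 hi (by omega)
      have heq : s + (p - 1 - s) = p - 1 := by omega
      rw [heq] at hcol'
      linarith
  have hx : 1 + (∑ s ∈ Finset.Icc 1 (p - 1),
      ((∑ t ∈ Finset.Icc (s + 1) (p - 1), a t s) - a s s)) ≤ 1 := by linarith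
  have ha11 : 0 ≤ a 1 1 := ha0 1 1 le_rfl le_rfl (by omega)
  have hlam1 : lam p ≤ lam 1 := by
    have key : ∀ k : ℕ, 1 ≤ k → k ≤ p → lam k ≤ lam 1 := by
      intro k
      induction k with
      | zero => omega
      | succ n ih =>
        intro _ hk
        rcases Nat.eq_or_lt_of_le (Nat.one_le_iff_ne_zero.mpr (by omega) : 1 ≤ n + 1) with h | h
        · rw [← h]
        · have hn1 : 1 ≤ n := by omega
          have := hlam n hn1 (by omega)
          have := ih hn1 (by omega)
          linarith
    exact key p (by omega) le_rfl
  have hp2 : (2 : ℤ) ≤ (p : ℤ) := by exact_mod_cast hp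
  constructor <;> linarith
end

section
/- For a triangular sequence s with respect to λ and any ℓ with 2 ≤ ℓ ≤ p-1, the point A₁(s) is strictly North of A_ℓ(s), i.e., the y-coordinate of A₁(s) strictly exceeds that of A_ℓ(s). -/
theorem A1_strictly_N_Aell
    (p : ℕ) (hp : 2 ≤ p)
    (lam : ℕ → ℤ) (hlam : ∀ j, 1 ≤ j → j < p → lam (j + 1) ≤ lam j)
    (hlam0 : 0 ≤ lam p)
    (a : ℕ → ℕ → ℤ)
    (ha0 : ∀ i j, 1 ≤ j → j ≤ i → i ≤ p - 1 → 0 ≤ a i j)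
    (habd : ∀ i j, 1 ≤ j → j ≤ i → i ≤ p - 1 → a i j ≤ lam (j + 1))
    (hcol : ∀ j i, 1 ≤ j → 1 ≤ i → j + i ≤ p - 1 →
      (∑ t ∈ Finset.Icc (j + 1) (j + i), a t j) ≤ a j j)
    (ℓ : ℕ) (hℓ1 : 2 ≤ ℓ) (hℓ2 : ℓ ≤ p - 1) :
    lam ℓ + (p : ℤ) - ℓ + 1 - (∑ t ∈ Finset.Icc 1 (ℓ - 1), a ℓ t) <
      lam 1 + (p : ℤ) := by
  have hℓp : ℓ < p := lt_of_le_of_lt hℓ2 (Nat.sub_lt (by omega) one_pos)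
  -- lam ℓ ≤ lam 1
  have hmono : ∀ j, 1 ≤ j → j ≤ p → lam j ≤ lam 1 := by
    intro j
    induction j with
    | zero => omega
    | succ n ih =>
      intro _ hj
      rcases Nat.eq_zero_or_pos n with h | h
      · simp [h]
      · exact le_trans (hlam n (by omega) (by omega)) (ih (by omega) (by omega))
  have h1 : lam ℓ ≤ lam 1 := hmono ℓ (by omega) (by omega)
  -- sum nonneg
  have h2 : 0 ≤ ∑ t ∈ Finset.Icc 1 (ℓ - 1), a ℓ t := by
    apply Finset.sum_nonneg
    intro t ht
    rw [Finset.mem_Icc] at ht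
    exact ha0 ℓ t ht.1 (by omega) hℓ2
  have hℓ2' : (2 : ℤ) ≤ (ℓ : ℤ) := by exact_mod_cast hℓ1
  linarith
end

section
/- Let E₁,…,E_p and F₁,…,F_p be lattice points in ℤ² and let m_{ij} be the number of East/South lattice paths from E_i to F_j. Then det(m_{ij}) = Σ_w ε(w) · N_w, where the sum is over permutations w of {1,…,p}, ε(w) is the sign of w, and N_w is the number of p-tuples (π₁,…,π_p) of pairwise non-intersecting lattice paths with π_i : E_{w(i)} → F_i. -/
/-- A lattice path in `ℤ²` using unit East and South steps. -/
def IsESPath (P : List (ℤ × ℤ)) (A B : ℤ × ℤ) : Prop :=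
  P ≠ [] ∧ P.head? = some A ∧ P.getLast? = some B ∧
    List.Chain' (fun p q : ℤ × ℤ => q = (p.1 + 1, p.2) ∨ q = (p.1, p.2 - 1)) P

open List

namespace LGV

abbrev Pt := ℤ × ℤ
abbrev Step (p q : Pt) : Prop := q = (p.1 + 1, p.2) ∨ q = (p.1, p.2 - 1)

lemma step_wt {p q : Pt} (h : Step p q) : q.1 - q.2 = p.1 - p.2 + 1 := by
  rcases h with h | h <;> subst h <;> simp <;> ring

lemma path_nodup {P : List Pt} {A B : Pt} (h : IsESPath P A B) : P.Nodup := by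
  have hc : List.Chain' (fun p q : Pt => p.1 - p.2 < q.1 - q.2) P :=
    h.2.2.2.imp (fun {a b} hpq => by have := step_wt hpq; omega)
  haveI : IsTrans Pt (fun p q : Pt => p.1 - p.2 < q.1 - q.2) := ⟨fun _ _ _ => by omega⟩
  exact (List.isChain_iff_pairwise.1 hc).imp (fun hlt => by
    intro he; subst he; omega)

lemma path_mem_bound {P : List Pt} {A B : Pt} (h : IsESPath P A B) :
    ∀ z ∈ P, z ∈ Set.Icc (A.1, B.2) (B.1, A.2) := by
  obtain ⟨hne, hh, hl, hc⟩ := h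
  have fwd : ∀ (Q : List Pt) (C : Pt), Q.head? = some C →
      List.Chain' Step Q → ∀ z ∈ Q, C.1 ≤ z.1 ∧ z.2 ≤ C.2 := by
    intro Q
    induction Q with
    | nil => intro C hC; simp at hC
    | cons a l ih =>
      intro C hC hch z hz
      simp only [head?_cons, Option.some_inj] at hC
      subst hC
      rcases List.mem_cons.1 hz with rfl | hz
      · exact ⟨le_refl _, le_refl _⟩
      · rcases l with _ | ⟨b, l⟩
        · simp at hz
        · have hch' := (List.isChain_cons_cons.1 hch)
          have := ih b rfl hch'.2 z hz
          rcases hch'.1 with hs | hs <;> subst hs <;> constructor <;> simp at this ⊢ <;> omega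
  have bwd : ∀ z ∈ P, z.1 ≤ B.1 ∧ B.2 ≤ z.2 := by
    have hcr : List.Chain' (fun p q => Step q p) P.reverse := by
      unfold List.Chain'; rw [List.isChain_reverse]; exact hc
    have hhr : P.reverse.head? = some B := by
      rw [List.head?_reverse]; exact hl
    have fwd2 : ∀ (Q : List Pt) (C : Pt), Q.head? = some C →
        List.Chain' (fun p q => Step q p) Q → ∀ z ∈ Q, z.1 ≤ C.1 ∧ C.2 ≤ z.2 := by
      intro Q
      induction Q with
      | nil => intro C hC; simp at hC
      | cons a l ih =>
        intro C hC hch z hz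
        simp only [head?_cons, Option.some_inj] at hC
        subst hC
        rcases List.mem_cons.1 hz with rfl | hz
        · exact ⟨le_refl _, le_refl _⟩
        · rcases l with _ | ⟨b, l⟩
          · simp at hz
          · have hch' := (List.isChain_cons_cons.1 hch)
            have := ih b rfl hch'.2 z hz
            rcases hch'.1 with hs | hs <;> subst hs <;> constructor <;> simp at this ⊢ <;> omega
    intro z hz
    have := fwd2 P.reverse B hhr hcr z (by simpa using hz)
    exact this
  intro z hz
  have h1 := fwd P A hh hc z hz
  have h2 := bwd z hz
  constructor <;> constructor <;> simp <;> omega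

lemma finite_lists {α : Type*} {s : Set α} (hs : s.Finite) (n : ℕ) :
    {l : List α | l.length ≤ n ∧ ∀ x ∈ l, x ∈ s}.Finite := by
  induction n with
  | zero =>
    apply Set.Finite.subset (Set.finite_singleton ([] : List α))
    rintro l ⟨hl, -⟩
    have : l.length = 0 := Nat.le_zero.mp hl
    simpa using List.length_eq_zero_iff.mp this
  | succ n ih =>
    apply Set.Finite.subset ((Set.finite_singleton ([] : List α)).union
      (Set.Finite.image2 List.cons hs ih))
    rintro l ⟨hl, hmem⟩
    rcases l with _ | ⟨a, l⟩
    · exact Or.inl rfl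
    · refine Or.inr (Set.mem_image2_of_mem (hmem a (by simp)) ⟨?_, fun x hx => hmem x (by simp [hx])⟩)
      simpa using hl

instance finite_paths (A B : Pt) : Finite {P : List Pt // IsESPath P A B} := by
  have hfin : {P : List Pt | IsESPath P A B}.Finite := by
    have hs : (Set.Icc ((A.1, B.2) : Pt) (B.1, A.2)).Finite := Set.finite_Icc _ _
    apply Set.Finite.subset (finite_lists hs (hs.toFinset.card))
    intro P hP
    refine ⟨?_, path_mem_bound hP⟩
    have hnd : P.Nodup := path_nodup hP
    calc P.length = P.toFinset.card := (List.toFinset_card_of_nodup hnd).symm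
      _ ≤ hs.toFinset.card := Finset.card_le_card (by
          intro z hz
          rw [Set.Finite.mem_toFinset]
          exact path_mem_bound hP z (by simpa using hz))
  exact hfin.to_subtype

end LGV
section C
open List
namespace LGV

lemma splice {A B A' B' : Pt} {a b t t' : List Pt} {x : Pt}
    (h : IsESPath (a ++ x :: t) A B) (h' : IsESPath (b ++ x :: t') A' B') :
    IsESPath (a ++ x :: t') A B' := by
  obtain ⟨-, hh, -, hc⟩ := h
  obtain ⟨-, -, hl', hc'⟩ := h'
  refine ⟨by simp, ?_, ?_, ?_⟩
  · rcases a with _ | ⟨c, a⟩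
    · simpa using hh
    · simpa using hh
  · rw [List.getLast?_append_cons] at hl' ⊢
    exact hl'
  · unfold List.Chain' at hc hc' ⊢; rw [List.isChain_append] at hc hc' ⊢
    refine ⟨hc.1, hc'.2.1, ?_⟩
    intro z hz y hy
    simp only [head?_cons, Option.mem_def, Option.some_inj] at hy
    subst hy
    exact hc.2.2 z hz x (by simp)

section Swap
open scoped Classical
variable {p : ℕ} {E F : Fin p → Pt}

noncomputable def meetB (τ : Fin p → List Pt) (i : Fin p) (z : Pt) : Bool :=
  decide (∃ k, k ≠ i ∧ z ∈ τ k)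

lemma meetB_iff {τ : Fin p → List Pt} {i : Fin p} {z : Pt} :
    meetB τ i z = true ↔ ∃ k, k ≠ i ∧ z ∈ τ k := by
  simp only [meetB, decide_eq_true_iff]

lemma not_meetB_iff {τ : Fin p → List Pt} {i : Fin p} {z : Pt} :
    (!meetB τ i z) = true ↔ ∀ k, k ≠ i → z ∉ τ k := by
  simp only [meetB, Bool.not_eq_true', decide_eq_false_iff_not]
  push_neg
  rfl

def MeetsAt (τ : Fin p → List Pt) (i : Fin p) : Prop :=
  ∃ z ∈ τ i, ∃ k, k ≠ i ∧ z ∈ τ k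

def Canon (τ : Fin p → List Pt) (i j : Fin p) (x : Pt) : Prop :=
  MeetsAt τ i ∧ (∀ k, MeetsAt τ k → i ≤ k) ∧
  ((τ i).dropWhile (fun z => !meetB τ i z)).head? = some x ∧
  j ≠ i ∧ x ∈ τ j ∧ (∀ k, k ≠ i → x ∈ τ k → j ≤ k)

noncomputable def swapped (τ : Fin p → List Pt) (i j : Fin p) (x : Pt) : Fin p → List Pt :=
  Function.update (Function.update τ
      i ((τ i).takeWhile (fun z => !meetB τ i z) ++
          x :: ((τ j).dropWhile (fun z => decide (z ≠ x))).tail))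
    j ((τ j).takeWhile (fun z => decide (z ≠ x)) ++
          x :: ((τ i).dropWhile (fun z => !meetB τ i z)).tail)

lemma canon_unique {τ : Fin p → List Pt} {i j i' j' : Fin p} {x x' : Pt}
    (h : Canon τ i j x) (h' : Canon τ i' j' x') : i = i' ∧ j = j' ∧ x = x' := by
  obtain ⟨hMi, hmin, hx, hji, hxj, hjmin⟩ := h
  obtain ⟨hMi', hmin', hx', hji', hxj', hjmin'⟩ := h'
  have hi : i = i' := _root_.le_antisymm (hmin i' hMi') (hmin' i hMi)
  subst hi
  rw [hx] at hx'
  have hxe : x = x' := Option.some_inj.mp hx'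
  subst hxe
  exact ⟨rfl, _root_.le_antisymm (hjmin j' hji' hxj') (hjmin' j hji hxj), rfl⟩

lemma exists_canon {τ : Fin p → List Pt}
    (hM : ∃ i j, i ≠ j ∧ ∃ z, z ∈ τ i ∧ z ∈ τ j) : ∃ i j x, Canon τ i j x := by
  obtain ⟨i₀, j₀, hij₀, z₀, hz₀i, hz₀j⟩ := hM
  have hS : (Finset.univ.filter (fun k => MeetsAt τ k)).Nonempty := by
    refine ⟨i₀, ?_⟩
    simp only [Finset.mem_filter, Finset.mem_univ, true_and]
    exact ⟨z₀, hz₀i, j₀, Ne.symm hij₀, hz₀j⟩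
  set i := (Finset.univ.filter (fun k => MeetsAt τ k)).min' hS with hidef
  have hMi : MeetsAt τ i := by
    have := (Finset.univ.filter (fun k => MeetsAt τ k)).min'_mem hS
    simpa using this
  have hmin : ∀ k, MeetsAt τ k → i ≤ k := by
    intro k hk
    exact Finset.min'_le _ _ (by simpa using hk)
  have hdne : (τ i).dropWhile (fun z => !meetB τ i z) ≠ [] := by
    intro hnil
    rw [List.dropWhile_eq_nil_iff] at hnil
    obtain ⟨z, hz, k, hk, hzk⟩ := hMi
    exact not_meetB_iff.1 (hnil z hz) k hk hzk
  set x := ((τ i).dropWhile (fun z => !meetB τ i z)).head hdne with hxdef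
  have hx : ((τ i).dropWhile (fun z => !meetB τ i z)).head? = some x :=
    List.head?_eq_head hdne
  have hxm : ∃ k, k ≠ i ∧ x ∈ τ k := by
    have h2 := List.head_dropWhile_not (fun z => !meetB τ i z) (l := τ i) hdne
    rw [← hxdef] at h2
    apply meetB_iff.1
    revert h2
    cases meetB τ i x <;> simp
  obtain ⟨k₀, hk₀, hxk₀⟩ := hxm
  have hT : (Finset.univ.filter (fun k => k ≠ i ∧ x ∈ τ k)).Nonempty :=
    ⟨k₀, by simpa using ⟨hk₀, hxk₀⟩⟩
  set j := (Finset.univ.filter (fun k => k ≠ i ∧ x ∈ τ k)).min' hT with hjdef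
  have hjp : j ≠ i ∧ x ∈ τ j := by
    have := (Finset.univ.filter (fun k => k ≠ i ∧ x ∈ τ k)).min'_mem hT
    simpa using this
  refine ⟨i, j, x, hMi, hmin, hx, hjp.1, hjp.2, ?_⟩
  intro k hk hxk
  exact Finset.min'_le _ _ (by simpa using ⟨hk, hxk⟩)

end Swap
end LGV
end C
namespace LGV
open List
section Swap2
open scoped Classical
variable {p : ℕ} {E F : Fin p → Pt}

lemma tw_split {α : Type*} (P : α → Bool) (l₁ l₂ : List α) (y : α)
    (h1 : ∀ z ∈ l₁, P z = true) (h2 : P y = false) :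
    (l₁ ++ y :: l₂).takeWhile P = l₁ ∧ (l₁ ++ y :: l₂).dropWhile P = y :: l₂ := by
  induction l₁ with
  | nil => simp [List.takeWhile_cons, List.dropWhile_cons, h2]
  | cons c t ih =>
    have hy : P c = true := h1 c (by simp)
    have ih' := ih (fun z hz => h1 z (by simp [hz]))
    constructor
    · simpa [List.takeWhile_cons, hy] using ih'.1
    · simpa [List.dropWhile_cons, hy] using ih'.2

lemma decomp {α : Type*} {l : List α} (P : α → Bool) {x : α}
    (hx : (l.dropWhile P).head? = some x) :
    l = l.takeWhile P ++ x :: (l.dropWhile P).tail ∧ P x = false := by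
  have hPx : P x = false := by
    have := List.head?_dropWhile_not P l
    rw [hx] at this
    exact this
  have hcons : l.dropWhile P = x :: (l.dropWhile P).tail := by
    have hne : l.dropWhile P ≠ [] := by intro h; rw [h] at hx; simp at hx
    have h1 : (l.dropWhile P).head hne = x := by
      rw [List.head?_eq_head hne] at hx; exact Option.some_inj.mp hx
    rw [← h1]
    exact (List.cons_head_tail hne).symm
  constructor
  · conv_lhs => rw [← List.takeWhile_append_dropWhile (p := P) (l := l), hcons]
  · exact hPx

lemma canon_step {v : Equiv.Perm (Fin p)} {τ : Fin p → List Pt}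
    (hOk : ∀ k, IsESPath (τ k) (E k) (F (v k)))
    {i j : Fin p} {x : Pt} (hC : Canon τ i j x) :
    (∀ k, IsESPath (swapped τ i j x k) (E k) (F ((v * Equiv.swap i j) k))) ∧
    Canon (swapped τ i j x) i j x ∧ swapped (swapped τ i j x) i j x = τ := by
  obtain ⟨hMi, hmin, hx, hji, hxj, hjmin⟩ := hC
  have hij : i ≠ j := Ne.symm hji
  obtain ⟨hTi, hPix⟩ := decomp (fun z => !meetB τ i z) hx
  have hdne : (τ j).dropWhile (fun z => decide (z ≠ x)) ≠ [] := by
    intro hnil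
    rw [List.dropWhile_eq_nil_iff] at hnil
    have := hnil x hxj
    simp at this
  have hdxj : ((τ j).dropWhile (fun z => decide (z ≠ x))).head? = some x := by
    have h3 : ((τ j).dropWhile (fun z => decide (z ≠ x))).head hdne = x := by
      have h2 := List.head_dropWhile_not (fun z => decide (z ≠ x)) (l := τ j) hdne
      simpa using h2
    rw [List.head?_eq_head hdne, h3]
  obtain ⟨hTj, -⟩ := decomp (fun z => decide (z ≠ x)) hdxj
  obtain ⟨a, had⟩ : ∃ y, (τ i).takeWhile (fun z => !meetB τ i z) = y := ⟨_, rfl⟩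
  obtain ⟨ti, htid⟩ : ∃ y, ((τ i).dropWhile (fun z => !meetB τ i z)).tail = y := ⟨_, rfl⟩
  obtain ⟨b, hbd⟩ : ∃ y, (τ j).takeWhile (fun z => decide (z ≠ x)) = y := ⟨_, rfl⟩
  obtain ⟨tj, htjd⟩ : ∃ y, ((τ j).dropWhile (fun z => decide (z ≠ x))).tail = y := ⟨_, rfl⟩
  rw [had, htid] at hTi
  rw [hbd, htjd] at hTj
  obtain ⟨σ, hσd⟩ : ∃ y, swapped τ i j x = y := ⟨_, rfl⟩
  rw [hσd]
  have hσi : σ i = a ++ x :: tj := by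
    rw [← hσd]
    simp only [swapped]
    rw [Function.update_of_ne hij, Function.update_self, had, htjd]
  have hσj : σ j = b ++ x :: ti := by
    rw [← hσd]
    simp only [swapped]
    rw [Function.update_self, hbd, htid]
  have hσk : ∀ k, k ≠ i → k ≠ j → σ k = τ k := by
    intro k hki hkj
    rw [← hσd]
    simp only [swapped]
    rw [Function.update_of_ne hkj, Function.update_of_ne hki]
  have hxσi : x ∈ σ i := by rw [hσi]; simp
  have hxσj : x ∈ σ j := by rw [hσj]; simp
  have hxτi : x ∈ τ i := by rw [hTi]; simp
  have haP : ∀ z ∈ a, ∀ k, k ≠ i → z ∉ τ k := by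
    intro z hz
    have hmem : z ∈ (τ i).takeWhile (fun z => !meetB τ i z) := by rw [had]; exact hz
    exact not_meetB_iff.1 (List.mem_takeWhile_imp (p := fun z => !meetB τ i z) hmem)
  have hbne : ∀ z ∈ b, z ≠ x := by
    intro z hz
    have hmem : z ∈ (τ j).takeWhile (fun z => decide (z ≠ x)) := by rw [hbd]; exact hz
    have := List.mem_takeWhile_imp (p := fun z => decide (z ≠ x)) hmem
    simpa using this
  have hbsub : ∀ z ∈ b, z ∈ τ j := by
    intro z hz; rw [hTj]; exact List.mem_append_left _ hz
  have ndI : (τ i).Nodup := path_nodup (hOk i)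
  have hdisj : ∀ z ∈ a, z ∉ x :: ti := by
    rw [hTi] at ndI
    exact fun z hz hz' => (List.nodup_append.1 ndI).2.2 z hz z hz' rfl
  have haP' : ∀ z ∈ a, ∀ k, k ≠ i → z ∉ σ k := by
    intro z hz k hk
    by_cases hkj : k = j
    · subst hkj
      rw [hσj]
      intro hmem
      rcases List.mem_append.1 hmem with hb | hxt
      · exact haP z hz k hk (hbsub z hb)
      · rcases List.mem_cons.1 hxt with rfl | hti
        · exact haP z hz k hk hxj
        · exact hdisj z hz (List.mem_cons_of_mem _ hti)
    · rw [hσk k hk hkj]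
      exact haP z hz k hk
  have hpa : ∀ z ∈ a, (!meetB σ i z) = true :=
    fun z hz => not_meetB_iff.2 (haP' z hz)
  have hpx : (!meetB σ i x) = false := by
    have : meetB σ i x = true := meetB_iff.2 ⟨j, hji, hxσj⟩
    rw [this]
    rfl
  have hsplit1 := tw_split (fun z => !meetB σ i z) a tj x hpa hpx
  have htw1 : (σ i).takeWhile (fun z => !meetB σ i z) = a := by rw [hσi]; exact hsplit1.1
  have hdw1 : (σ i).dropWhile (fun z => !meetB σ i z) = x :: tj := by rw [hσi]; exact hsplit1.2
  have hpb : ∀ z ∈ b, decide (z ≠ x) = true := by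
    intro z hz
    simpa using hbne z hz
  have hpbx : decide (x ≠ x) = false := by simp
  have hsplit2 := tw_split (fun z => decide (z ≠ x)) b ti x hpb hpbx
  have htw2 : (σ j).takeWhile (fun z => decide (z ≠ x)) = b := by rw [hσj]; exact hsplit2.1
  have hdw2 : (σ j).dropWhile (fun z => decide (z ≠ x)) = x :: ti := by rw [hσj]; exact hsplit2.2
  have hun : ∀ z, (z ∈ σ i ∨ z ∈ σ j) ↔ (z ∈ τ i ∨ z ∈ τ j) := by
    intro z
    rw [hσi, hσj, hTi, hTj]
    simp only [List.mem_append, List.mem_cons]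
    tauto
  have hMeq : ∀ k, MeetsAt σ k ↔ MeetsAt τ k := by
    intro k
    by_cases hki : k = i
    · subst hki
      exact ⟨fun _ => hMi, fun _ => ⟨x, hxσi, j, hji, hxσj⟩⟩
    · by_cases hkj : k = j
      · subst hkj
        exact ⟨fun _ => ⟨x, hxj, i, hij, hxτi⟩, fun _ => ⟨x, hxσj, i, hij, hxσi⟩⟩
      · unfold MeetsAt
        rw [hσk k hki hkj]
        constructor
        · rintro ⟨z, hz, m, hm, hzm⟩
          by_cases hmi : m = i
          · rcases (hun z).1 (Or.inl (hmi ▸ hzm)) with h | h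
            · exact ⟨z, hz, i, hmi ▸ hm, h⟩
            · exact ⟨z, hz, j, fun he => hkj he.symm, h⟩
          · by_cases hmj : m = j
            · rcases (hun z).1 (Or.inr (hmj ▸ hzm)) with h | h
              · exact ⟨z, hz, i, fun he => hki he.symm, h⟩
              · exact ⟨z, hz, j, hmj ▸ hm, h⟩
            · exact ⟨z, hz, m, hm, (hσk m hmi hmj) ▸ hzm⟩
        · rintro ⟨z, hz, m, hm, hzm⟩
          by_cases hmi : m = i
          · rcases (hun z).2 (Or.inl (hmi ▸ hzm)) with h | h
            · exact ⟨z, hz, i, hmi ▸ hm, h⟩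
            · exact ⟨z, hz, j, fun he => hkj he.symm, h⟩
          · by_cases hmj : m = j
            · rcases (hun z).2 (Or.inr (hmj ▸ hzm)) with h | h
              · exact ⟨z, hz, i, fun he => hki he.symm, h⟩
              · exact ⟨z, hz, j, hmj ▸ hm, h⟩
            · exact ⟨z, hz, m, hm, (hσk m hmi hmj).symm ▸ hzm⟩
  have hCσ : Canon σ i j x := by
    refine ⟨⟨x, hxσi, j, hji, hxσj⟩, ?_, ?_, hji, hxσj, ?_⟩
    · intro k hk; exact hmin k ((hMeq k).1 hk)
    · rw [hdw1]
      rfl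
    · intro k hk hxk
      apply hjmin k hk
      by_cases hkj : k = j
      · subst hkj; exact hxj
      · rw [← hσk k hk hkj]; exact hxk
  have hOk' : ∀ k, IsESPath (σ k) (E k) (F ((v * Equiv.swap i j) k)) := by
    have hPi : IsESPath (a ++ x :: ti) (E i) (F (v i)) := by rw [← hTi]; exact hOk i
    have hPj : IsESPath (b ++ x :: tj) (E j) (F (v j)) := by rw [← hTj]; exact hOk j
    intro k
    by_cases hki : k = i
    · rw [hki, hσi]
      have he : (v * Equiv.swap i j) i = v j := by
        simp [Equiv.Perm.mul_apply, Equiv.swap_apply_left]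
      rw [he]
      exact splice hPi hPj
    · by_cases hkj : k = j
      · rw [hkj, hσj]
        have he : (v * Equiv.swap i j) j = v i := by
          simp [Equiv.Perm.mul_apply, Equiv.swap_apply_right]
        rw [he]
        exact splice hPj hPi
      · rw [hσk k hki hkj]
        have he : (v * Equiv.swap i j) k = v k := by
          simp [Equiv.Perm.mul_apply, Equiv.swap_apply_of_ne_of_ne hki hkj]
        rw [he]
        exact hOk k
  refine ⟨hOk', hCσ, ?_⟩
  funext k
  by_cases hkj : k = j
  · subst hkj
    simp only [swapped]
    rw [Function.update_self, htw2, hdw1, List.tail_cons, ← hTj]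
  · by_cases hki : k = i
    · subst hki
      simp only [swapped]
      rw [Function.update_of_ne hij, Function.update_self, htw1, hdw2, List.tail_cons, ← hTi]
    · simp only [swapped]
      rw [Function.update_of_ne hkj, Function.update_of_ne hki]
      exact hσk k hki hkj

end Swap2
end LGV
namespace LGV
open List
section Count
open scoped Classical
variable {p : ℕ} (E F : Fin p → Pt)

instance okFinite (v : Equiv.Perm (Fin p)) :
    Finite {τ : Fin p → List Pt // ∀ k, IsESPath (τ k) (E k) (F (v k))} :=
  Finite.of_equiv _
    (Equiv.subtypePiEquivPi (p := fun k (P : List Pt) => IsESPath P (E k) (F (v k)))).symm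

instance badFiberFinite (v : Equiv.Perm (Fin p)) :
    Finite {τ : Fin p → List Pt // (∀ k, IsESPath (τ k) (E k) (F (v k))) ∧
      ¬ ∀ i j, i ≠ j → ∀ x ∈ τ i, x ∉ τ j} := by
  apply Finite.of_injective
    (fun s : {τ : Fin p → List Pt // (∀ k, IsESPath (τ k) (E k) (F (v k))) ∧
      ¬ ∀ i j, i ≠ j → ∀ x ∈ τ i, x ∉ τ j} =>
      (⟨s.1, s.2.1⟩ : {τ : Fin p → List Pt // ∀ k, IsESPath (τ k) (E k) (F (v k))}))
  intro s t hst
  apply Subtype.ext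
  have h := congrArg Subtype.val hst
  simpa using h

abbrev Bad : Type := Σ v : Equiv.Perm (Fin p),
  {τ : Fin p → List Pt // (∀ k, IsESPath (τ k) (E k) (F (v k))) ∧
    ¬ ∀ i j, i ≠ j → ∀ x ∈ τ i, x ∉ τ j}

lemma bad_canon (s : Bad E F) : ∃ i j x, Canon s.2.1 i j x := by
  apply exists_canon
  have h := s.2.2.2
  push_neg at h
  obtain ⟨i, j, hij, z, h1, h2⟩ := h
  exact ⟨i, j, hij, z, h1, h2⟩

lemma canon_ne {τ : Fin p → List Pt} {i j : Fin p} {x : Pt} (h : Canon τ i j x) : i ≠ j :=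
  Ne.symm h.2.2.2.1

lemma canon_memi {τ : Fin p → List Pt} {i j : Fin p} {x : Pt} (h : Canon τ i j x) : x ∈ τ i := by
  have hd := (decomp (fun z => !meetB τ i z) h.2.2.1).1
  rw [hd]
  simp

lemma canon_memj {τ : Fin p → List Pt} {i j : Fin p} {x : Pt} (h : Canon τ i j x) : x ∈ τ j :=
  h.2.2.2.2.1

noncomputable def swapBad (s : Bad E F) (i j : Fin p) (x : Pt) (hC : Canon s.2.1 i j x) :
    Bad E F :=
  ⟨s.1 * Equiv.swap i j, swapped s.2.1 i j x,
    (canon_step s.2.2.1 hC).1,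
    fun hall => hall i j (canon_ne hC) x
      (canon_memi (canon_step s.2.2.1 hC).2.1) (canon_memj (canon_step s.2.2.1 hC).2.1)⟩

noncomputable def invol (s : Bad E F) : Bad E F :=
  swapBad E F s (bad_canon E F s).choose (bad_canon E F s).choose_spec.choose
    (bad_canon E F s).choose_spec.choose_spec.choose
    (bad_canon E F s).choose_spec.choose_spec.choose_spec

lemma invol_spec (s : Bad E F) : ∃ i j x, Canon s.2.1 i j x ∧
    (invol E F s).1 = s.1 * Equiv.swap i j ∧ (invol E F s).2.1 = swapped s.2.1 i j x :=
  ⟨_, _, _, (bad_canon E F s).choose_spec.choose_spec.choose_spec, rfl, rfl⟩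

lemma bad_ext {s t : Bad E F} (h1 : s.1 = t.1) (h2 : s.2.1 = t.2.1) : s = t := by
  obtain ⟨v, τs⟩ := s
  obtain ⟨w, τt⟩ := t
  dsimp at h1 h2
  subst h1
  exact congrArg _ (Subtype.ext h2)

lemma invol_invol (s : Bad E F) : invol E F (invol E F s) = s := by
  obtain ⟨i, j, x, hC, h1, h2⟩ := invol_spec E F s
  obtain ⟨i', j', x', hC', h1', h2'⟩ := invol_spec E F (invol E F s)
  have hCσ : Canon (invol E F s).2.1 i j x := by
    rw [h2]; exact (canon_step s.2.2.1 hC).2.1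
  obtain ⟨e1, e2, e3⟩ := canon_unique hC' hCσ
  subst e1; subst e2; subst e3
  apply bad_ext
  · rw [h1', h1, mul_assoc, Equiv.swap_mul_self, mul_one]
  · rw [h2', h2]
    exact (canon_step s.2.2.1 hC).2.2

lemma invol_sign (s : Bad E F) :
    (Equiv.Perm.sign (invol E F s).1 : ℤ) = - (Equiv.Perm.sign s.1 : ℤ) := by
  obtain ⟨i, j, x, hC, h1, h2⟩ := invol_spec E F s
  rw [h1, Equiv.Perm.sign_mul, Equiv.Perm.sign_swap (canon_ne hC)]
  simp

lemma invol_ne (s : Bad E F) : invol E F s ≠ s := by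
  intro h
  have := invol_sign E F s
  rw [h] at this
  have h2 : (Equiv.Perm.sign s.1 : ℤ) ≠ 0 := Units.ne_zero _
  omega

lemma bad_sum_zero :
    ∑ v : Equiv.Perm (Fin p), (Equiv.Perm.sign v : ℤ) *
      (Nat.card {τ : Fin p → List Pt // (∀ k, IsESPath (τ k) (E k) (F (v k))) ∧
        ¬ ∀ i j, i ≠ j → ∀ x ∈ τ i, x ∉ τ j} : ℤ) = 0 := by
  letI : ∀ v : Equiv.Perm (Fin p), Fintype {τ : Fin p → List Pt //
      (∀ k, IsESPath (τ k) (E k) (F (v k))) ∧ ¬ ∀ i j, i ≠ j → ∀ x ∈ τ i, x ∉ τ j} :=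
    fun v => Fintype.ofFinite _
  have hstep : ∀ v : Equiv.Perm (Fin p), (Equiv.Perm.sign v : ℤ) *
      (Nat.card {τ : Fin p → List Pt // (∀ k, IsESPath (τ k) (E k) (F (v k))) ∧
        ¬ ∀ i j, i ≠ j → ∀ x ∈ τ i, x ∉ τ j} : ℤ) =
      ∑ _t : {τ : Fin p → List Pt // (∀ k, IsESPath (τ k) (E k) (F (v k))) ∧
        ¬ ∀ i j, i ≠ j → ∀ x ∈ τ i, x ∉ τ j}, (Equiv.Perm.sign v : ℤ) := by
    intro v
    rw [Nat.card_eq_fintype_card, Finset.sum_const, nsmul_eq_mul, mul_comm]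
    rfl
  rw [Finset.sum_congr rfl (fun v _ => hstep v)]
  rw [Finset.sum_sigma']
  exact Finset.sum_ninvolution (invol E F)
    (fun s => by rw [invol_sign]; ring)
    (fun s _ => invol_ne E F s)
    (fun s => Finset.mem_sigma.mpr ⟨Finset.mem_univ _, Finset.mem_univ _⟩)
    (invol_invol E F)

end Count
end LGV
namespace LGV
section Final
open scoped Classical
variable {p : ℕ} (E F : Fin p → Pt)

noncomputable def reindex (w : Equiv.Perm (Fin p)) :
    {π : Fin p → List Pt // (∀ i, IsESPath (π i) (E (w i)) (F i)) ∧
        ¬ ∀ i j, i ≠ j → ∀ x ∈ π i, x ∉ π j} ≃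
    {τ : Fin p → List Pt // (∀ k, IsESPath (τ k) (E k) (F (w⁻¹ k))) ∧
        ¬ ∀ i j, i ≠ j → ∀ x ∈ τ i, x ∉ τ j} where
  toFun s := ⟨fun k => s.1 (w⁻¹ k),
    fun k => by simpa [Equiv.Perm.inv_def, Equiv.apply_symm_apply] using s.2.1 (w⁻¹ k),
    by
      intro hD
      apply s.2.2
      intro i j hij x hx1 hx2
      have hij' : w i ≠ w j := fun h => hij (w.injective h)
      have := hD (w i) (w j) hij' x
      simp only [Equiv.Perm.inv_def, Equiv.symm_apply_apply] at this
      exact this hx1 hx2⟩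
  invFun s := ⟨fun i => s.1 (w i),
    fun i => by simpa [Equiv.Perm.inv_def, Equiv.symm_apply_apply] using s.2.1 (w i),
    by
      intro hD
      apply s.2.2
      intro i j hij x hx1 hx2
      have hij' : w⁻¹ i ≠ w⁻¹ j := fun h => hij (w⁻¹.injective h)
      have := hD (w⁻¹ i) (w⁻¹ j) hij' x
      simp only [Equiv.Perm.inv_def, Equiv.apply_symm_apply] at this
      exact this hx1 hx2⟩
  left_inv s := by
    apply Subtype.ext
    funext i
    simp [Equiv.Perm.inv_def, Equiv.symm_apply_apply]
  right_inv s := by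
    apply Subtype.ext
    funext k
    simp [Equiv.Perm.inv_def, Equiv.apply_symm_apply]

end Final
end LGV


/-- Signed Lindström–Gessel–Viennot lemma, without ordering hypotheses on the
endpoints. -/
theorem signed_LGV (p : ℕ) (E F : Fin p → ℤ × ℤ) :
    Matrix.det (Matrix.of fun i j : Fin p =>
        (Nat.card {P : List (ℤ × ℤ) // IsESPath P (E i) (F j)} : ℤ)) =
      ∑ w : Equiv.Perm (Fin p), (Equiv.Perm.sign w : ℤ) *
        (Nat.card {π : Fin p → List (ℤ × ℤ) //
            (∀ i, IsESPath (π i) (E (w i)) (F i)) ∧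
            ∀ i j, i ≠ j → ∀ x ∈ π i, x ∉ π j} : ℤ) := by
  classical
  have hfin : ∀ w : Equiv.Perm (Fin p),
      Finite {π : Fin p → List (ℤ × ℤ) // ∀ i, IsESPath (π i) (E (w i)) (F i)} := by
    intro w
    exact Finite.of_equiv _
      (Equiv.subtypePiEquivPi (p := fun i (P : List (ℤ × ℤ)) => IsESPath P (E (w i)) (F i))).symm
  have hdet : Matrix.det (Matrix.of fun i j : Fin p =>
        (Nat.card {P : List (ℤ × ℤ) // IsESPath P (E i) (F j)} : ℤ)) =
      ∑ w : Equiv.Perm (Fin p), (Equiv.Perm.sign w : ℤ) *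
        ∏ i, (Nat.card {P : List (ℤ × ℤ) // IsESPath P (E (w i)) (F i)} : ℤ) := by
    rw [Matrix.det_apply]
    refine Finset.sum_congr rfl fun w _ => ?_
    rw [Units.smul_def, zsmul_eq_mul]
    simp [Matrix.of_apply]
  have hprod : ∀ w : Equiv.Perm (Fin p),
      ∏ i, (Nat.card {P : List (ℤ × ℤ) // IsESPath P (E (w i)) (F i)} : ℤ) =
      (Nat.card {π : Fin p → List (ℤ × ℤ) // ∀ i, IsESPath (π i) (E (w i)) (F i)} : ℤ) := by
    intro w
    rw [← Nat.cast_prod]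
    congr 1
    rw [← Nat.card_pi]
    exact (Nat.card_congr
      (Equiv.subtypePiEquivPi (p := fun i (P : List (ℤ × ℤ)) => IsESPath P (E (w i)) (F i)))).symm
  have hsplit : ∀ w : Equiv.Perm (Fin p),
      (Nat.card {π : Fin p → List (ℤ × ℤ) // ∀ i, IsESPath (π i) (E (w i)) (F i)} : ℤ) =
      (Nat.card {π : Fin p → List (ℤ × ℤ) // (∀ i, IsESPath (π i) (E (w i)) (F i)) ∧
          ∀ i j, i ≠ j → ∀ x ∈ π i, x ∉ π j} : ℤ) +
      (Nat.card {π : Fin p → List (ℤ × ℤ) // (∀ i, IsESPath (π i) (E (w i)) (F i)) ∧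
          ¬ ∀ i j, i ≠ j → ∀ x ∈ π i, x ∉ π j} : ℤ) := by
    intro w
    haveI := hfin w
    rw [← Nat.cast_add]
    congr 1
    have e1 := Equiv.subtypeSubtypeEquivSubtypeInter
      (fun π : Fin p → List (ℤ × ℤ) => ∀ i, IsESPath (π i) (E (w i)) (F i))
      (fun π => ∀ i j, i ≠ j → ∀ x ∈ π i, x ∉ π j)
    have e2 := Equiv.subtypeSubtypeEquivSubtypeInter
      (fun π : Fin p → List (ℤ × ℤ) => ∀ i, IsESPath (π i) (E (w i)) (F i))
      (fun π => ¬ ∀ i j, i ≠ j → ∀ x ∈ π i, x ∉ π j)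
    rw [← Nat.card_congr e1, ← Nat.card_congr e2, ← Nat.card_sum]
    exact (Nat.card_congr (Equiv.sumCompl
      (fun y : {π : Fin p → List (ℤ × ℤ) // ∀ i, IsESPath (π i) (E (w i)) (F i)} =>
        ∀ i j, i ≠ j → ∀ x ∈ y.1 i, x ∉ y.1 j))).symm
  rw [hdet]
  rw [Finset.sum_congr rfl (fun w _ => by rw [hprod w, hsplit w, mul_add])]
  rw [Finset.sum_add_distrib]
  have hbad : ∑ w : Equiv.Perm (Fin p), (Equiv.Perm.sign w : ℤ) *
      (Nat.card {π : Fin p → List (ℤ × ℤ) // (∀ i, IsESPath (π i) (E (w i)) (F i)) ∧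
        ¬ ∀ i j, i ≠ j → ∀ x ∈ π i, x ∉ π j} : ℤ) = 0 := by
    have hre : ∀ w : Equiv.Perm (Fin p),
        (Equiv.Perm.sign w : ℤ) *
        (Nat.card {π : Fin p → List (ℤ × ℤ) // (∀ i, IsESPath (π i) (E (w i)) (F i)) ∧
          ¬ ∀ i j, i ≠ j → ∀ x ∈ π i, x ∉ π j} : ℤ) =
        (Equiv.Perm.sign w⁻¹ : ℤ) *
        (Nat.card {τ : Fin p → List (ℤ × ℤ) // (∀ k, IsESPath (τ k) (E k) (F (w⁻¹ k))) ∧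
          ¬ ∀ i j, i ≠ j → ∀ x ∈ τ i, x ∉ τ j} : ℤ) := by
      intro w
      rw [Equiv.Perm.sign_inv, Nat.card_congr (LGV.reindex E F w)]
    rw [Finset.sum_congr rfl (fun w _ => hre w)]
    refine Eq.trans (Fintype.sum_equiv (Equiv.inv (Equiv.Perm (Fin p)))
      _ (fun v => (Equiv.Perm.sign v : ℤ) *
        (Nat.card {τ : Fin p → List (ℤ × ℤ) // (∀ k, IsESPath (τ k) (E k) (F (v k))) ∧
          ¬ ∀ i j, i ≠ j → ∀ x ∈ τ i, x ∉ τ j} : ℤ)) (fun w => rfl)) (LGV.bad_sum_zero E F)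
  rw [hbad, add_zero]
end

section
/- Let E₁,…,E_p and F₁,…,F_p be lattice points such that any tuple of pairwise non-intersecting East/South paths (π_i : E_{w(i)} → F_i) forces w to be the identity permutation. Then det(#paths(E_i → F_j)) equals the number of p-tuples of pairwise non-intersecting paths π_i : E_i → F_i, and in particular is nonnegative. -/
namespace LGVaux

def R (p q : ℤ × ℤ) : Prop := q = (p.1 + 1, p.2) ∨ q = (p.1, p.2 - 1)

def φz : ℤ × ℤ → ℤ := fun p => p.1 - p.2

lemma step_phi {p q : ℤ × ℤ} (h : R p q) : φz q = φz p + 1 := by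
  rcases h with h | h <;> simp [φz, h] <;> ring

lemma step_fst {p q : ℤ × ℤ} (h : R p q) : p.1 ≤ q.1 := by
  rcases h with h | h <;> simp [h]

lemma espath_chain {P A B} (h : IsESPath P A B) : List.Chain' R P := h.2.2.2

lemma espath_pairwise_lt {P A B} (h : IsESPath P A B) :
    P.Pairwise (fun a b => φz a < φz b) := by
  haveI : IsTrans (ℤ × ℤ) (fun a b => φz a < φz b) := ⟨fun _ _ _ => lt_trans⟩
  exact List.isChain_iff_pairwise.1 <|
    (espath_chain h).imp (fun {a b} hab => by rw [step_phi hab]; omega)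

lemma espath_nodup {P A B} (h : IsESPath P A B) : P.Nodup :=
  (espath_pairwise_lt h).imp (fun {a b} hab => by intro he; rw [he] at hab; omega)

lemma espath_cons {P A B} (h : IsESPath P A B) :
    ∃ t, P = A :: t := by
  obtain ⟨hne, hh, -, -⟩ := h
  obtain ⟨a, t, rfl⟩ := List.exists_cons_of_ne_nil hne
  simp at hh
  exact ⟨t, by rw [hh]⟩

lemma espath_mem_bounds {P A B x} (r : ℤ × ℤ → ℤ) (hr : ∀ a b, R a b → r a ≤ r b)
    (h : IsESPath P A B) (hx : x ∈ P) : r A ≤ r x ∧ r x ≤ r B := by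
  haveI : IsTrans (ℤ × ℤ) (fun a b => r a ≤ r b) := ⟨fun _ _ _ => le_trans⟩
  have hpw : P.Pairwise (fun a b => r a ≤ r b) :=
    List.isChain_iff_pairwise.1 <| (espath_chain h).imp (fun {a b} hab => hr a b hab)
  constructor
  · obtain ⟨t, rfl⟩ := espath_cons h
    rcases List.mem_cons.1 hx with rfl | hx
    · exact le_refl _
    · exact (List.pairwise_cons.1 hpw).1 x hx
  · have hpw' : P.reverse.Pairwise (fun a b => r b ≤ r a) := List.pairwise_reverse.2 hpw
    have hne : P.reverse ≠ [] := by simpa using h.1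
    obtain ⟨b, t, he⟩ := List.exists_cons_of_ne_nil hne
    have hb : b = B := by
      have := h.2.2.1
      rw [← List.head?_reverse, he] at this
      simpa using this
    subst hb
    rw [he] at hpw'
    rcases List.mem_cons.1 (by rw [← he]; simpa using hx) with rfl | hx'
    · exact le_refl _
    · exact (List.pairwise_cons.1 hpw').1 x hx'

lemma espath_length {P A B} (h : IsESPath P A B) :
    (P.length : ℤ) = φz B - φz A + 1 := by
  induction P generalizing A with
  | nil => exact absurd rfl h.1
  | cons a t ih =>
    obtain ⟨hne, hh, hl, hc⟩ := h
    have ha : a = A := by simpa using hh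
    subst ha
    cases t with
    | nil =>
      have : a = B := by simpa using hl
      subst this; simp
    | cons b t' =>
      have hR : R a b := (List.isChain_cons_cons.1 hc).1
      have h2 : IsESPath (b :: t') b B := by
        refine ⟨by simp, by simp, ?_, (List.isChain_cons_cons.1 hc).2⟩
        rw [← hl]; symm; exact List.getLast?_cons_cons ..
      have := ih h2
      have hphi := step_phi hR
      simp only [List.length_cons] at this ⊢
      push_cast at this ⊢
      omega

lemma finite_lists {α : Type*} (T : Set α) (hT : T.Finite) (n : ℕ) :
    {l : List α | l.length ≤ n ∧ ∀ x ∈ l, x ∈ T}.Finite := by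
  induction n with
  | zero =>
    apply Set.Finite.subset (Set.finite_singleton ([] : List α))
    rintro l ⟨hl, -⟩
    simp_all [List.length_eq_zero_iff.1 (Nat.le_zero.1 hl)]
  | succ n ih =>
    apply Set.Finite.subset (Set.Finite.insert []
      (Set.Finite.image2 List.cons hT ih))
    rintro l ⟨hl, hmem⟩
    cases l with
    | nil => exact Set.mem_insert _ _
    | cons a t =>
      refine Set.mem_insert_of_mem _ (Set.mem_image2_of_mem (hmem a (by simp)) ?_)
      exact ⟨by simpa using hl, fun x hx => hmem x (by simp [hx])⟩

lemma finite_espaths (A B : ℤ × ℤ) : {P : List (ℤ × ℤ) | IsESPath P A B}.Finite := by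
  set T : Set (ℤ × ℤ) :=
    (fun ac : ℤ × ℤ => (ac.1, ac.1 - ac.2)) '' (Set.Icc A.1 B.1 ×ˢ Set.Icc (φz A) (φz B))
  have hT : T.Finite :=
    Set.Finite.image _ ((Set.finite_Icc _ _).prod (Set.finite_Icc _ _))
  apply Set.Finite.subset (finite_lists T hT (φz B - φz A + 1).toNat)
  intro P hP
  constructor
  · have := espath_length hP
    omega
  · intro x hx
    have h1 := espath_mem_bounds (fun z => z.1) (fun a b hab => step_fst hab) hP hx
    have h2 := espath_mem_bounds φz (fun a b hab => le_of_lt (by rw [step_phi hab]; omega)) hP hx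
    refine ⟨(x.1, φz x), ⟨⟨h1.1, h1.2⟩, ⟨h2.1, h2.2⟩⟩, ?_⟩
    simp [φz]

instance finite_espaths_subtype (A B : ℤ × ℤ) : Finite {P : List (ℤ × ℤ) // IsESPath P A B} :=
  (finite_espaths A B).to_subtype

variable {α : Type*} [DecidableEq α]

def pre (x : α) (P : List α) : List α := P.takeWhile (fun y => decide (y ≠ x))
def post (x : α) (P : List α) : List α := (P.dropWhile (fun y => decide (y ≠ x))).tail

lemma split_eq {x : α} {P : List α} (hx : x ∈ P) : P = pre x P ++ x :: post x P := by
  have hne : P.dropWhile (fun y => decide (y ≠ x)) ≠ [] := by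
    intro h
    have := List.dropWhile_eq_nil_iff.1 h x hx
    simp at this
  have hhead : (P.dropWhile (fun y => decide (y ≠ x))).head hne = x := by
    have := List.head_dropWhile_not (fun y => decide (y ≠ x)) (l := P) hne
    simpa using this
  conv_lhs => rw [← List.takeWhile_append_dropWhile (p := fun y => decide (y ≠ x)) (l := P),
    ← List.cons_head_tail hne, hhead]
  rfl

lemma not_mem_pre (x : α) (P : List α) : x ∉ pre x P := by
  intro h
  have := List.mem_takeWhile_imp h
  simp at this

lemma pre_post_glue {x : α} {l m : List α} (hall : ∀ y ∈ l, y ≠ x) :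
    pre x (l ++ x :: m) = l ∧ post x (l ++ x :: m) = m := by
  have h1 : l.takeWhile (fun y => decide (y ≠ x)) = l :=
    List.takeWhile_eq_self_iff.2 (fun y hy => by simpa using hall y hy)
  have h2 : l.dropWhile (fun y => decide (y ≠ x)) = [] :=
    List.dropWhile_eq_nil_iff.2 (fun y hy => by simpa using hall y hy)
  constructor
  · rw [pre, List.takeWhile_append, h1, if_pos rfl]
    simp [List.takeWhile_cons]
  · rw [post, List.dropWhile_append, h2]
    simp [List.dropWhile_cons]

lemma glue {P Q : List (ℤ × ℤ)} {A B A' B' x} (hP : IsESPath P A B) (hQ : IsESPath Q A' B')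
    (hxP : x ∈ P) (hxQ : x ∈ Q) : IsESPath (pre x Q ++ x :: post x P) A' B := by
  have hQe := split_eq hxQ
  have hPe := split_eq hxP
  obtain ⟨hQne, hQh, hQl, hQc⟩ := hQ
  obtain ⟨hPne, hPh, hPl, hPc⟩ := hP
  rw [hQe] at hQc hQh
  rw [hPe] at hPc hPl
  have cQ := List.isChain_append.1 hQc
  have cP := List.isChain_append.1 hPc
  refine ⟨by simp, ?_, ?_, ?_⟩
  · rw [List.head?_append] at hQh ⊢
    simpa using hQh
  · rw [List.getLast?_append] at hPl ⊢
    have hs : (x :: post x P).getLast?.isSome := List.getLast?_isSome.2 (by simp)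
    rw [Option.or_of_isSome hs] at hPl ⊢
    exact hPl
  · exact List.isChain_append.2 ⟨cQ.1, cP.2.1, fun a ha y hy => by
      simp only [List.head?_cons, Option.mem_def, Option.some.injEq] at hy
      subst hy; exact cQ.2.2 a ha x (by simp)⟩

lemma phi_split {P : List (ℤ × ℤ)} {A B x} (h : IsESPath P A B) (hx : x ∈ P) :
    (∀ y ∈ pre x P, φz y < φz x) ∧ (∀ y ∈ post x P, φz x < φz y) := by
  have pw := espath_pairwise_lt h
  rw [split_eq hx] at pw
  obtain ⟨p1, p2, cross⟩ := List.pairwise_append.1 pw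
  exact ⟨fun y hy => cross y hy x (by simp), fun y hy => (List.pairwise_cons.1 p2).1 y hy⟩

lemma mem_split {P : List (ℤ × ℤ)} {x y : ℤ × ℤ} (hx : x ∈ P) :
    y ∈ P ↔ (y ∈ pre x P ∨ y = x ∨ y ∈ post x P) := by
  conv_lhs => rw [split_eq hx]
  simp

section Main
variable {p : ℕ}

def Bad (π : Fin p → List (ℤ × ℤ)) : Prop :=
  ∃ i j, i ≠ j ∧ ∃ x, x ∈ π i ∧ x ∈ π j

open Classical in
noncomputable def dset (π : Fin p → List (ℤ × ℤ)) : Finset (ℤ × ℤ) :=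
  (Finset.univ.biUnion fun i => (π i).toFinset).filter
    (fun x => ∃ i j, i ≠ j ∧ x ∈ π i ∧ x ∈ π j)

lemma mem_dset {π : Fin p → List (ℤ × ℤ)} {y : ℤ × ℤ} :
    y ∈ dset π ↔ ∃ i j, i ≠ j ∧ y ∈ π i ∧ y ∈ π j := by
  classical
  simp only [dset, Finset.mem_filter, Finset.mem_biUnion, Finset.mem_univ, true_and,
    List.mem_toFinset]
  constructor
  · exact fun h => h.2
  · rintro ⟨i, j, hij, h1, h2⟩
    exact ⟨⟨i, h1⟩, ⟨i, j, hij, h1, h2⟩⟩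

lemma dset_nonempty {π : Fin p → List (ℤ × ℤ)} (h : Bad π) : (dset π).Nonempty := by
  obtain ⟨i, j, hij, x, h1, h2⟩ := h
  exact ⟨x, mem_dset.2 ⟨i, j, hij, h1, h2⟩⟩

noncomputable def x₀ (π : Fin p → List (ℤ × ℤ)) (h : Bad π) : ℤ × ℤ :=
  ofLex (((dset π).image toLex).min' ((dset_nonempty h).image _))

lemma x₀_mem_dset {π : Fin p → List (ℤ × ℤ)} (h : Bad π) : x₀ π h ∈ dset π := by
  have hm := Finset.min'_mem ((dset π).image toLex) ((dset_nonempty h).image _)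
  simp only [Finset.mem_image] at hm
  obtain ⟨y, hy, he⟩ := hm
  have : y = x₀ π h := by rw [x₀, ← he]; rfl
  rwa [← this]

def ixs (π : Fin p → List (ℤ × ℤ)) (x : ℤ × ℤ) : Finset (Fin p) :=
  Finset.univ.filter (fun k => x ∈ π k)

lemma mem_ixs {π : Fin p → List (ℤ × ℤ)} {x : ℤ × ℤ} {k : Fin p} :
    k ∈ ixs π x ↔ x ∈ π k := by simp [ixs]

lemma exists_pair {π : Fin p → List (ℤ × ℤ)} (h : Bad π) :
    ∃ i j, i ≠ j ∧ i ∈ ixs π (x₀ π h) ∧ j ∈ ixs π (x₀ π h) := by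
  obtain ⟨i, j, hij, h1, h2⟩ := mem_dset.1 (x₀_mem_dset h)
  exact ⟨i, j, hij, mem_ixs.2 h1, mem_ixs.2 h2⟩

lemma ixs_nonempty {π : Fin p → List (ℤ × ℤ)} (h : Bad π) : (ixs π (x₀ π h)).Nonempty := by
  obtain ⟨i, _, _, hi, _⟩ := exists_pair h
  exact ⟨i, hi⟩

noncomputable def i₀ (π : Fin p → List (ℤ × ℤ)) (h : Bad π) : Fin p :=
  (ixs π (x₀ π h)).min' (ixs_nonempty h)

lemma ixs_erase_nonempty {π : Fin p → List (ℤ × ℤ)} (h : Bad π) :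
    ((ixs π (x₀ π h)).erase (i₀ π h)).Nonempty := by
  obtain ⟨i, j, hij, hi, hj⟩ := exists_pair h
  by_cases hc : i = i₀ π h
  · exact ⟨j, Finset.mem_erase.2 ⟨by rw [← hc]; exact hij.symm, hj⟩⟩
  · exact ⟨i, Finset.mem_erase.2 ⟨hc, hi⟩⟩

noncomputable def j₀ (π : Fin p → List (ℤ × ℤ)) (h : Bad π) : Fin p :=
  ((ixs π (x₀ π h)).erase (i₀ π h)).min' (ixs_erase_nonempty h)

lemma x₀_mem_i₀ {π : Fin p → List (ℤ × ℤ)} (h : Bad π) : x₀ π h ∈ π (i₀ π h) :=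
  mem_ixs.1 (Finset.min'_mem _ (ixs_nonempty h))

lemma j₀_mem_erase {π : Fin p → List (ℤ × ℤ)} (h : Bad π) :
    j₀ π h ∈ (ixs π (x₀ π h)).erase (i₀ π h) :=
  Finset.min'_mem _ (ixs_erase_nonempty h)

lemma x₀_mem_j₀ {π : Fin p → List (ℤ × ℤ)} (h : Bad π) : x₀ π h ∈ π (j₀ π h) :=
  mem_ixs.1 (Finset.mem_erase.1 (j₀_mem_erase h)).2

lemma i₀_ne_j₀ {π : Fin p → List (ℤ × ℤ)} (h : Bad π) : i₀ π h ≠ j₀ π h :=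
  fun hc => (Finset.mem_erase.1 (j₀_mem_erase h)).1 hc.symm

noncomputable def newπ (π : Fin p → List (ℤ × ℤ)) (h : Bad π) : Fin p → List (ℤ × ℤ) := fun k =>
  if k = i₀ π h then pre (x₀ π h) (π (j₀ π h)) ++ (x₀ π h) :: post (x₀ π h) (π (i₀ π h))
  else if k = j₀ π h then pre (x₀ π h) (π (i₀ π h)) ++ (x₀ π h) :: post (x₀ π h) (π (j₀ π h))
  else π k

lemma mem_pre_ne {x y : ℤ × ℤ} {P : List (ℤ × ℤ)} (h : y ∈ pre x P) : y ≠ x := by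
  have := List.mem_takeWhile_imp h
  simpa using this

lemma newπ_mem_x {π : Fin p → List (ℤ × ℤ)} (h : Bad π) (k : Fin p) :
    x₀ π h ∈ newπ π h k ↔ x₀ π h ∈ π k := by
  by_cases hk : k = i₀ π h
  · subst hk
    simp only [newπ, if_pos rfl]
    exact iff_of_true (by simp) (x₀_mem_i₀ h)
  by_cases hk' : k = j₀ π h
  · subst hk'
    simp only [newπ, if_neg hk, if_pos rfl]
    exact iff_of_true (by simp) (x₀_mem_j₀ h)
  · simp [newπ, hk, hk']

end Main

section Main2
variable {p : ℕ}

lemma mem_of_mem_pre {x y : ℤ × ℤ} {P : List (ℤ × ℤ)} (hx : x ∈ P) (h : y ∈ pre x P) :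
    y ∈ P := (mem_split hx).2 (Or.inl h)

lemma mem_of_mem_post {x y : ℤ × ℤ} {P : List (ℤ × ℤ)} (hx : x ∈ P) (h : y ∈ post x P) :
    y ∈ P := (mem_split hx).2 (Or.inr (Or.inr h))

lemma newπ_i₀ {π : Fin p → List (ℤ × ℤ)} (h : Bad π) :
    newπ π h (i₀ π h) = pre (x₀ π h) (π (j₀ π h)) ++ (x₀ π h) :: post (x₀ π h) (π (i₀ π h)) := by
  simp [newπ]

lemma newπ_j₀ {π : Fin p → List (ℤ × ℤ)} (h : Bad π) :
    newπ π h (j₀ π h) = pre (x₀ π h) (π (i₀ π h)) ++ (x₀ π h) :: post (x₀ π h) (π (j₀ π h)) := by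
  simp [newπ, (i₀_ne_j₀ h).symm]

lemma newπ_other {π : Fin p → List (ℤ × ℤ)} (h : Bad π) {k : Fin p}
    (hk : k ≠ i₀ π h) (hk' : k ≠ j₀ π h) : newπ π h k = π k := by
  simp [newπ, hk, hk']

lemma newπ_mem {π : Fin p → List (ℤ × ℤ)} (h : Bad π)
    (hgood : ∀ k, ∃ A B, IsESPath (π k) A B) (y : ℤ × ℤ) :
    ∃ e : Equiv.Perm (Fin p), ∀ k, (y ∈ newπ π h k ↔ y ∈ π (e k)) := by
  obtain ⟨Ai, Bi, hi⟩ := hgood (i₀ π h)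
  obtain ⟨Aj, Bj, hj⟩ := hgood (j₀ π h)
  have hxi := x₀_mem_i₀ h
  have hxj := x₀_mem_j₀ h
  have φi := phi_split hi hxi
  have φj := phi_split hj hxj
  rcases lt_trichotomy (φz y) (φz (x₀ π h)) with hlt | heq | hgt
  · refine ⟨Equiv.swap (i₀ π h) (j₀ π h), fun k => ?_⟩
    by_cases hk : k = i₀ π h
    · subst hk
      rw [Equiv.swap_apply_left]
      rw [newπ_i₀ h]
      simp only [List.mem_append, List.mem_cons]
      constructor
      · rintro (hy | hy | hy)
        · exact mem_of_mem_pre hxj hy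
        · exact absurd (congrArg φz hy) (by omega)
        · exact absurd (φi.2 y hy) (by omega)
      · intro hy
        rcases (mem_split hxj).1 hy with h1 | h1 | h1
        · exact Or.inl h1
        · exact absurd (congrArg φz h1) (by omega)
        · exact absurd (φj.2 y h1) (by omega)
    by_cases hk' : k = j₀ π h
    · subst hk'
      rw [Equiv.swap_apply_right]
      rw [newπ_j₀ h]
      simp only [List.mem_append, List.mem_cons]
      constructor
      · rintro (hy | hy | hy)
        · exact mem_of_mem_pre hxi hy
        · exact absurd (congrArg φz hy) (by omega)
        · exact absurd (φj.2 y hy) (by omega)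
      · intro hy
        rcases (mem_split hxi).1 hy with h1 | h1 | h1
        · exact Or.inl h1
        · exact absurd (congrArg φz h1) (by omega)
        · exact absurd (φi.2 y h1) (by omega)
    · rw [Equiv.swap_apply_of_ne_of_ne hk hk']
      rw [newπ_other h hk hk']
  · refine ⟨1, fun k => ?_⟩
    rw [Equiv.Perm.one_apply]
    by_cases hk : k = i₀ π h
    · subst hk
      rw [newπ_i₀ h]
      simp only [List.mem_append, List.mem_cons]
      constructor
      · rintro (hy | hy | hy)
        · exact absurd (φj.1 y hy) (by omega)
        · rw [hy]; exact hxi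
        · exact absurd (φi.2 y hy) (by omega)
      · intro hy
        rcases (mem_split hxi).1 hy with h1 | h1 | h1
        · exact absurd (φi.1 y h1) (by omega)
        · exact Or.inr (Or.inl h1)
        · exact absurd (φi.2 y h1) (by omega)
    by_cases hk' : k = j₀ π h
    · subst hk'
      rw [newπ_j₀ h]
      simp only [List.mem_append, List.mem_cons]
      constructor
      · rintro (hy | hy | hy)
        · exact absurd (φi.1 y hy) (by omega)
        · rw [hy]; exact hxj
        · exact absurd (φj.2 y hy) (by omega)
      · intro hy
        rcases (mem_split hxj).1 hy with h1 | h1 | h1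
        · exact absurd (φj.1 y h1) (by omega)
        · exact Or.inr (Or.inl h1)
        · exact absurd (φj.2 y h1) (by omega)
    · rw [newπ_other h hk hk']
  · refine ⟨1, fun k => ?_⟩
    rw [Equiv.Perm.one_apply]
    by_cases hk : k = i₀ π h
    · subst hk
      rw [newπ_i₀ h]
      simp only [List.mem_append, List.mem_cons]
      constructor
      · rintro (hy | hy | hy)
        · exact absurd (φj.1 y hy) (by omega)
        · exact absurd (congrArg φz hy) (by omega)
        · exact mem_of_mem_post hxi hy
      · intro hy
        rcases (mem_split hxi).1 hy with h1 | h1 | h1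
        · exact absurd (φi.1 y h1) (by omega)
        · exact absurd (congrArg φz h1) (by omega)
        · exact Or.inr (Or.inr h1)
    by_cases hk' : k = j₀ π h
    · subst hk'
      rw [newπ_j₀ h]
      simp only [List.mem_append, List.mem_cons]
      constructor
      · rintro (hy | hy | hy)
        · exact absurd (φi.1 y hy) (by omega)
        · exact absurd (congrArg φz hy) (by omega)
        · exact mem_of_mem_post hxj hy
      · intro hy
        rcases (mem_split hxj).1 hy with h1 | h1 | h1
        · exact absurd (φj.1 y h1) (by omega)
        · exact absurd (congrArg φz h1) (by omega)
        · exact Or.inr (Or.inr h1)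
    · rw [newπ_other h hk hk']

end Main2

section Main3
variable {p : ℕ}

lemma min'_congr {α : Type*} [LinearOrder α] {s t : Finset α} (h : s = t) (hs : s.Nonempty)
    (ht : t.Nonempty) : s.min' hs = t.min' ht := by subst h; rfl

lemma bad_newπ {π : Fin p → List (ℤ × ℤ)} (h : Bad π) : Bad (newπ π h) := by
  refine ⟨i₀ π h, j₀ π h, i₀_ne_j₀ h, x₀ π h, ?_, ?_⟩
  · exact (newπ_mem_x h _).2 (x₀_mem_i₀ h)
  · exact (newπ_mem_x h _).2 (x₀_mem_j₀ h)

lemma dset_newπ {π : Fin p → List (ℤ × ℤ)} (h : Bad π)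
    (hgood : ∀ k, ∃ A B, IsESPath (π k) A B) : dset (newπ π h) = dset π := by
  ext y
  simp only [mem_dset]
  obtain ⟨e, he⟩ := newπ_mem h hgood y
  constructor
  · rintro ⟨i, j, hij, h1, h2⟩
    exact ⟨e i, e j, fun hc => hij (e.injective hc), (he i).1 h1, (he j).1 h2⟩
  · rintro ⟨i, j, hij, h1, h2⟩
    refine ⟨e.symm i, e.symm j, fun hc => hij (by simpa using congrArg e hc), ?_, ?_⟩
    · exact (he _).2 (by rwa [e.apply_symm_apply])
    · exact (he _).2 (by rwa [e.apply_symm_apply])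

lemma x₀_newπ {π : Fin p → List (ℤ × ℤ)} (h : Bad π) (h' : Bad (newπ π h))
    (hgood : ∀ k, ∃ A B, IsESPath (π k) A B) : x₀ (newπ π h) h' = x₀ π h := by
  exact congrArg ofLex (min'_congr (by rw [dset_newπ h hgood]) _ _)

lemma ixs_newπ {π : Fin p → List (ℤ × ℤ)} (h : Bad π) :
    ixs (newπ π h) (x₀ π h) = ixs π (x₀ π h) := by
  ext k
  simp only [mem_ixs]
  exact newπ_mem_x h k

lemma i₀_newπ {π : Fin p → List (ℤ × ℤ)} (h : Bad π) (h' : Bad (newπ π h))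
    (hgood : ∀ k, ∃ A B, IsESPath (π k) A B) : i₀ (newπ π h) h' = i₀ π h := by
  exact min'_congr (by rw [x₀_newπ h h' hgood, ixs_newπ h]) _ _

lemma j₀_newπ {π : Fin p → List (ℤ × ℤ)} (h : Bad π) (h' : Bad (newπ π h))
    (hgood : ∀ k, ∃ A B, IsESPath (π k) A B) : j₀ (newπ π h) h' = j₀ π h := by
  exact min'_congr (by rw [x₀_newπ h h' hgood, ixs_newπ h, i₀_newπ h h' hgood]) _ _

lemma pre_ne_x (x : ℤ × ℤ) (P : List (ℤ × ℤ)) : ∀ y ∈ pre x P, y ≠ x :=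
  fun _ hy => mem_pre_ne hy

lemma newπ_newπ {π : Fin p → List (ℤ × ℤ)} (h : Bad π) (h' : Bad (newπ π h))
    (hgood : ∀ k, ∃ A B, IsESPath (π k) A B) : newπ (newπ π h) h' = π := by
  funext k
  have hx := x₀_newπ h h' hgood
  have hi := i₀_newπ h h' hgood
  have hj := j₀_newπ h h' hgood
  by_cases hk : k = i₀ π h
  · subst hk
    rw [show i₀ π h = i₀ (newπ π h) h' from hi.symm, newπ_i₀ h', hi, hj, hx,
      newπ_i₀ h, newπ_j₀ h,
      (pre_post_glue (pre_ne_x _ _)).1, (pre_post_glue (pre_ne_x _ _)).2,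
      ← split_eq (x₀_mem_i₀ h)]
  by_cases hk' : k = j₀ π h
  · subst hk'
    rw [show j₀ π h = j₀ (newπ π h) h' from hj.symm, newπ_j₀ h', hi, hj, hx,
      newπ_i₀ h, newπ_j₀ h,
      (pre_post_glue (pre_ne_x _ _)).1, (pre_post_glue (pre_ne_x _ _)).2,
      ← split_eq (x₀_mem_j₀ h)]
  · rw [newπ_other h' (by rwa [hi]) (by rwa [hj]), newπ_other h hk hk']

end Main3


variable {p : ℕ}

abbrev Om (p : ℕ) (E F : Fin p → ℤ × ℤ) : Type :=
  Σ σ : Equiv.Perm (Fin p), {π : Fin p → List (ℤ × ℤ) // ∀ i, IsESPath (π i) (E (σ i)) (F i)}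

instance tupFinite (E F : Fin p → ℤ × ℤ) (σ : Equiv.Perm (Fin p)) :
    Finite {π : Fin p → List (ℤ × ℤ) // ∀ i, IsESPath (π i) (E (σ i)) (F i)} :=
  Finite.of_equiv _ (Equiv.subtypePiEquivPi (p := fun i P => IsESPath P (E (σ i)) (F i))).symm

instance omFinite (E F : Fin p → ℤ × ℤ) : Finite (Om p E F) := by
  unfold Om; infer_instance

lemma Om_ext {E F : Fin p → ℤ × ℤ} {ω ω' : Om p E F} (h1 : ω.1 = ω'.1)
    (h2 : ω.2.1 = ω'.2.1) : ω = ω' := by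
  rcases ω with ⟨σ, ρ⟩
  rcases ω' with ⟨σ', ρ'⟩
  dsimp at h1 h2
  subst h1
  exact congrArg _ (Subtype.ext h2)

lemma newπ_spec (E F : Fin p → ℤ × ℤ) (σ : Equiv.Perm (Fin p)) {π : Fin p → List (ℤ × ℤ)}
    (hπ : ∀ i, IsESPath (π i) (E (σ i)) (F i)) (h : Bad π) :
    ∀ k, IsESPath (newπ π h k) (E ((σ * Equiv.swap (i₀ π h) (j₀ π h)) k)) (F k) := by
  intro k
  by_cases hk : k = i₀ π h
  · subst hk
    rw [newπ_i₀ h, Equiv.Perm.mul_apply, Equiv.swap_apply_left]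
    exact glue (hπ _) (hπ _) (x₀_mem_i₀ h) (x₀_mem_j₀ h)
  by_cases hk' : k = j₀ π h
  · subst hk'
    rw [newπ_j₀ h, Equiv.Perm.mul_apply, Equiv.swap_apply_right]
    exact glue (hπ _) (hπ _) (x₀_mem_j₀ h) (x₀_mem_i₀ h)
  · rw [newπ_other h hk hk', Equiv.Perm.mul_apply, Equiv.swap_apply_of_ne_of_ne hk hk']
    exact hπ k

open Classical in
noncomputable def flip (E F : Fin p → ℤ × ℤ) (ω : Om p E F) : Om p E F :=
  if h : Bad ω.2.1 then
    ⟨ω.1 * Equiv.swap (i₀ ω.2.1 h) (j₀ ω.2.1 h), ⟨newπ ω.2.1 h, newπ_spec E F ω.1 ω.2.2 h⟩⟩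
  else ω

lemma flip_eq {E F : Fin p → ℤ × ℤ} {ω : Om p E F} (h : Bad ω.2.1) :
    flip E F ω = ⟨ω.1 * Equiv.swap (i₀ ω.2.1 h) (j₀ ω.2.1 h),
      ⟨newπ ω.2.1 h, newπ_spec E F ω.1 ω.2.2 h⟩⟩ := dif_pos h

lemma good_of_tup {E F : Fin p → ℤ × ℤ} {σ : Equiv.Perm (Fin p)} {π : Fin p → List (ℤ × ℤ)}
    (hπ : ∀ i, IsESPath (π i) (E (σ i)) (F i)) : ∀ k, ∃ A B, IsESPath (π k) A B :=
  fun k => ⟨_, _, hπ k⟩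

lemma flip_flip {E F : Fin p → ℤ × ℤ} {ω : Om p E F} (h : Bad ω.2.1) :
    flip E F (flip E F ω) = ω := by
  rw [flip_eq h]
  have h' : Bad (newπ ω.2.1 h) := bad_newπ h
  rw [flip_eq (ω := ⟨ω.1 * Equiv.swap (i₀ ω.2.1 h) (j₀ ω.2.1 h),
      ⟨newπ ω.2.1 h, newπ_spec E F ω.1 ω.2.2 h⟩⟩) h']
  have hgood := good_of_tup ω.2.2
  apply Om_ext
  · dsimp
    rw [i₀_newπ h h' hgood, j₀_newπ h h' hgood, mul_assoc, Equiv.swap_mul_self, mul_one]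
  · dsimp
    exact newπ_newπ h h' hgood

lemma path_cast {E F : Fin p → ℤ × ℤ} {σ : Equiv.Perm (Fin p)} {π : Fin p → List (ℤ × ℤ)}
    (hπ : ∀ i, IsESPath (π i) (E (σ i)) (F i)) (hσ : σ = 1) :
    ∀ i, IsESPath (π i) (E i) (F i) := by
  subst hσ
  simpa using hπ

end LGVaux

open LGVaux in
/-- Lindström–Gessel–Viennot lemma: if only the identity permutation admits
non-intersecting path tuples, the determinant counts them (hence is nonnegative). -/
theorem LGV_identity_count (p : ℕ) (E F : Fin p → ℤ × ℤ)
    (hid : ∀ (w : Equiv.Perm (Fin p)) (π : Fin p → List (ℤ × ℤ)),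
      (∀ i, IsESPath (π i) (E (w i)) (F i)) →
      (∀ i j, i ≠ j → ∀ x ∈ π i, x ∉ π j) → w = 1) :
    Matrix.det (Matrix.of fun i j : Fin p =>
        (Nat.card {P : List (ℤ × ℤ) // IsESPath P (E i) (F j)} : ℤ)) =
      (Nat.card {π : Fin p → List (ℤ × ℤ) //
          (∀ i, IsESPath (π i) (E i) (F i)) ∧
          ∀ i j, i ≠ j → ∀ x ∈ π i, x ∉ π j} : ℤ) ∧
    0 ≤ Matrix.det (Matrix.of fun i j : Fin p =>
        (Nat.card {P : List (ℤ × ℤ) // IsESPath P (E i) (F j)} : ℤ)) := by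
  classical
  letI I1 : ∀ σ : Equiv.Perm (Fin p),
      Fintype {π : Fin p → List (ℤ × ℤ) // ∀ i, IsESPath (π i) (E (σ i)) (F i)} :=
    fun σ => Fintype.ofFinite _
  letI I2 : Fintype (Om p E F) := inferInstance
  haveI I3 : Finite {π : Fin p → List (ℤ × ℤ) // ∀ i, IsESPath (π i) (E i) (F i)} :=
    Finite.of_equiv _ (Equiv.subtypePiEquivPi (p := fun i P => IsESPath P (E i) (F i))).symm
  haveI I4 : Finite {π : Fin p → List (ℤ × ℤ) //
      (∀ i, IsESPath (π i) (E i) (F i)) ∧ ∀ i j, i ≠ j → ∀ x ∈ π i, x ∉ π j} :=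
    Finite.of_injective
      (fun t => (⟨t.1, t.2.1⟩ : {π : Fin p → List (ℤ × ℤ) // ∀ i, IsESPath (π i) (E i) (F i)}))
      (by
        intro a b h
        have h2 : (⟨a.1, a.2.1⟩ : {π : Fin p → List (ℤ × ℤ) //
            ∀ i, IsESPath (π i) (E i) (F i)}).val =
            (⟨b.1, b.2.1⟩ : {π : Fin p → List (ℤ × ℤ) //
            ∀ i, IsESPath (π i) (E i) (F i)}).val := congrArg Subtype.val h
        exact Subtype.ext h2)
  letI I5 : Fintype {π : Fin p → List (ℤ × ℤ) //
      (∀ i, IsESPath (π i) (E i) (F i)) ∧ ∀ i j, i ≠ j → ∀ x ∈ π i, x ∉ π j} :=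
    Fintype.ofFinite _
  have key : Matrix.det (Matrix.of fun i j : Fin p =>
        (Nat.card {P : List (ℤ × ℤ) // IsESPath P (E i) (F j)} : ℤ)) =
      (Nat.card {π : Fin p → List (ℤ × ℤ) //
          (∀ i, IsESPath (π i) (E i) (F i)) ∧
          ∀ i j, i ≠ j → ∀ x ∈ π i, x ∉ π j} : ℤ) := by
    rw [Matrix.det_apply]
    have h1 : ∀ σ : Equiv.Perm (Fin p),
        (∏ i, (Matrix.of fun i j : Fin p =>
          (Nat.card {P : List (ℤ × ℤ) // IsESPath P (E i) (F j)} : ℤ)) (σ i) i) =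
        (Fintype.card {π : Fin p → List (ℤ × ℤ) // ∀ i, IsESPath (π i) (E (σ i)) (F i)} : ℤ) := by
      intro σ
      rw [← Nat.card_eq_fintype_card,
        Nat.card_congr (Equiv.subtypePiEquivPi (p := fun i P => IsESPath P (E (σ i)) (F i))),
        Nat.card_pi]
      push_cast
      rfl
    calc (∑ σ : Equiv.Perm (Fin p), Equiv.Perm.sign σ • ∏ i, (Matrix.of fun i j : Fin p =>
          (Nat.card {P : List (ℤ × ℤ) // IsESPath P (E i) (F j)} : ℤ)) (σ i) i)
        = ∑ σ : Equiv.Perm (Fin p),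
            ∑ _t : {π : Fin p → List (ℤ × ℤ) // ∀ i, IsESPath (π i) (E (σ i)) (F i)},
              ((Equiv.Perm.sign σ : ℤˣ) : ℤ) := by
          refine Finset.sum_congr rfl (fun σ _ => ?_)
          rw [h1 σ, Finset.sum_const, Finset.card_univ]
          simp [Units.smul_def, mul_comm]
      _ = ∑ ω : Om p E F, ((Equiv.Perm.sign ω.1 : ℤˣ) : ℤ) := by
          rw [Finset.sum_sigma' Finset.univ (fun _ => Finset.univ)
            (fun σ _ => ((Equiv.Perm.sign σ : ℤˣ) : ℤ)), Finset.univ_sigma_univ]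
      _ = (Nat.card {π : Fin p → List (ℤ × ℤ) //
          (∀ i, IsESPath (π i) (E i) (F i)) ∧
          ∀ i j, i ≠ j → ∀ x ∈ π i, x ∉ π j} : ℤ) := ?_
    rw [← Finset.sum_filter_add_sum_filter_not Finset.univ (fun ω : Om p E F => Bad ω.2.1)]
    have hzero : ∑ ω ∈ Finset.univ.filter (fun ω : Om p E F => Bad ω.2.1),
        ((Equiv.Perm.sign ω.1 : ℤˣ) : ℤ) = 0 := by
      refine Finset.sum_involution (fun ω _ => flip E F ω) ?_ ?_ ?_ ?_
      · intro ω hω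
        have hb : Bad ω.2.1 := (Finset.mem_filter.1 hω).2
        rw [flip_eq hb]
        dsimp only
        rw [Equiv.Perm.sign_mul, Equiv.Perm.sign_swap (i₀_ne_j₀ hb)]
        push_cast
        ring
      · intro ω hω _
        have hb : Bad ω.2.1 := (Finset.mem_filter.1 hω).2
        rw [flip_eq hb]
        intro hc
        have h2 := congrArg Sigma.fst hc
        dsimp only at h2
        have h3 : Equiv.swap (i₀ ω.2.1 hb) (j₀ ω.2.1 hb) = 1 := by
          have := mul_left_cancel (a := ω.1)
            (b := Equiv.swap (i₀ ω.2.1 hb) (j₀ ω.2.1 hb)) (c := 1) (by rw [mul_one, h2])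
          exact this
        have h4 := congrArg (fun e : Equiv.Perm (Fin p) => e (i₀ ω.2.1 hb)) h3
        simp only [Equiv.swap_apply_left, Equiv.Perm.one_apply] at h4
        exact i₀_ne_j₀ hb h4.symm
      · intro ω hω
        simp only [Finset.mem_filter]
        refine ⟨Finset.mem_univ _, ?_⟩
        have hb : Bad ω.2.1 := (Finset.mem_filter.1 hω).2
        rw [flip_eq hb]
        exact bad_newπ hb
      · intro ω hω
        exact flip_flip (Finset.mem_filter.1 hω).2
    rw [hzero, zero_add]
    have hσ1 : ∀ ω ∈ Finset.univ.filter (fun ω : Om p E F => ¬ Bad ω.2.1), ω.1 = 1 := by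
      intro ω hω
      refine hid ω.1 ω.2.1 ω.2.2 (fun i j hij x hx hx' => ?_)
      exact (Finset.mem_filter.1 hω).2 ⟨i, j, hij, x, hx, hx'⟩
    have hone : ∑ ω ∈ Finset.univ.filter (fun ω : Om p E F => ¬ Bad ω.2.1),
        ((Equiv.Perm.sign ω.1 : ℤˣ) : ℤ) =
        ((Finset.univ.filter (fun ω : Om p E F => ¬ Bad ω.2.1)).card : ℤ) := by
      have hconst : ∀ ω ∈ Finset.univ.filter (fun ω : Om p E F => ¬ Bad ω.2.1),
          ((Equiv.Perm.sign ω.1 : ℤˣ) : ℤ) = 1 := fun ω hω => by rw [hσ1 ω hω]; simp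
      rw [Finset.sum_congr rfl hconst, Finset.sum_const, nsmul_eq_mul, mul_one]
    rw [hone]
    congr 1
    rw [Nat.card_eq_fintype_card, ← Finset.card_univ]
    refine Finset.card_bij'
      (fun ω hω => ⟨ω.2.1, ⟨path_cast ω.2.2 (hσ1 ω hω),
        fun i j hij x hx hx' => (Finset.mem_filter.1 hω).2 ⟨i, j, hij, x, hx, hx'⟩⟩⟩)
      (fun t _ => ⟨1, ⟨t.1, fun k => by simpa using t.2.1 k⟩⟩) ?_ ?_ ?_ ?_
    · intro ω hω
      exact Finset.mem_univ _
    · intro t _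
      simp only [Finset.mem_filter]
      refine ⟨Finset.mem_univ _, fun hbad => ?_⟩
      obtain ⟨i, j, hij, x, h1, h2⟩ := hbad
      exact t.2.2 i j hij x h1 h2
    · intro ω hω
      exact Om_ext (hσ1 ω hω).symm rfl
    · intro t _
      exact Subtype.ext rfl
  exact ⟨key, key ▸ Int.natCast_nonneg _⟩
end

section
/- In the p=3 setting, if a triple of pairwise non-intersecting paths realizes a permutation w of the starting points A₁, A₂, A₃ (with endpoints B₁, B₂, B₃ on the diagonal, B₁ NE of B₂ NE of B₃) and w is not the identity, then w is either the transposition (12) or the transposition (23); the transposition (13) and the 3-cycles cannot occur, given that A₁ is strictly NE of A₃ and strictly N of A₂. -/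
lemma exists_fun {P : List (ℤ × ℤ)} {A B : ℤ × ℤ} (h : IsESPath P A B) :
    ∃ n : ℕ, ∃ f : ℕ → ℤ × ℤ,
      f 0 = A ∧ f n = B ∧
      (∀ i, i < n → f (i+1) = ((f i).1 + 1, (f i).2) ∨ f (i+1) = ((f i).1, (f i).2 - 1)) ∧
      (∀ i, i ≤ n → f i ∈ P) := by
  obtain ⟨hne, hhead, hlast, hchain⟩ := h
  have hlen : 0 < P.length := List.length_pos_iff.mpr hne
  refine ⟨P.length - 1, fun i => P.getD i A, ?_, ?_, ?_, ?_⟩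
  · show P.getD 0 A = A
    rw [List.getD_eq_getElem _ _ hlen]
    rw [List.head?_eq_head hne] at hhead
    simpa [List.head_eq_getElem] using hhead
  · show P.getD (P.length - 1) A = B
    rw [List.getD_eq_getElem _ _ (by omega)]
    rw [List.getLast?_eq_getLast hne] at hlast
    simpa [List.getLast_eq_getElem] using hlast
  · intro i hi
    have h1 : i < P.length := by omega
    have h2 : i + 1 < P.length := by omega
    have := List.isChain_iff_getElem.mp hchain i (by omega)
    simp only []
    rw [List.getD_eq_getElem _ _ h1, List.getD_eq_getElem _ _ h2]
    simpa [List.get_eq_getElem] using this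
  · intro i hi
    have h1 : i < P.length := by omega
    show P.getD i A ∈ P
    rw [List.getD_eq_getElem _ _ h1]
    exact List.getElem_mem _

section
variable {f : ℕ → ℤ × ℤ} {n : ℕ}
  (hstep : ∀ i, i < n → f (i+1) = ((f i).1 + 1, (f i).2) ∨ f (i+1) = ((f i).1, (f i).2 - 1))

include hstep

lemma diag_eq : ∀ i ≤ n, (f i).1 - (f i).2 = (f 0).1 - (f 0).2 + i := by
  intro i
  induction i with
  | zero => simp
  | succ k ih =>
    intro h
    have hk := ih (by omega)
    rcases hstep k (by omega) with h1 | h1 <;> rw [h1] <;> push_cast [Nat.cast_succ] <;> omega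

lemma snd_anti : ∀ i j, i ≤ j → j ≤ n → (f j).2 ≤ (f i).2 := by
  intro i j hij
  induction j with
  | zero => intro _
            have : i = 0 := by omega
            subst this; exact le_refl _
  | succ k ih =>
    intro hk
    rcases Nat.lt_or_ge i (k+1) with h | h
    · have := ih (by omega) (by omega)
      rcases hstep k (by omega) with h1 | h1 <;> rw [h1] <;> simp <;> omega
    · have : i = k + 1 := by omega
      subst this; exact le_refl _

lemma fst_mono : ∀ i j, i ≤ j → j ≤ n → (f i).1 ≤ (f j).1 := by
  intro i j hij
  induction j with
  | zero => intro _; have : i = 0 := by omega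
            subst this; exact le_refl _
  | succ k ih =>
    intro hk
    rcases Nat.lt_or_ge i (k+1) with h | h
    · have := ih (by omega) (by omega)
      rcases hstep k (by omega) with h1 | h1 <;> rw [h1] <;> simp <;> omega
    · have : i = k + 1 := by omega
      subst this; exact le_refl _

end
lemma no_cross {Am Ap : ℤ × ℤ} {b b' : ℤ} (hb : b' < b)
    (hx : Am.1 < Ap.1) (hy : Am.2 < Ap.2)
    {P Q : List (ℤ × ℤ)} (hP : IsESPath P Am (b, b)) (hQ : IsESPath Q Ap (b', b'))
    (hd : ∀ x ∈ P, x ∉ Q) : False := by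
  obtain ⟨n, f, hf0, hfn, hfs, hfm⟩ := exists_fun hP
  obtain ⟨m, g, hg0, hgn, hgs, hgm⟩ := exists_fun hQ
  have hdf : ∀ i ≤ n, (f i).1 - (f i).2 = (Am.1 - Am.2) + i := by
    intro i hi; rw [← hf0]; exact diag_eq hfs i hi
  have hdg : ∀ j ≤ m, (g j).1 - (g j).2 = (Ap.1 - Ap.2) + j := by
    intro j hj; rw [← hg0]; exact diag_eq hgs j hj
  have hn : Am.1 - Am.2 + (n : ℤ) = 0 := by
    have := hdf n le_rfl; rw [hfn] at this; omega
  have hm : Ap.1 - Ap.2 + (m : ℤ) = 0 := by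
    have := hdg m le_rfl; rw [hgn] at this; omega
  -- D k = y of f at diag -k minus y of g at diag -k
  have pos : ∀ k, k ≤ min n m → 0 < (f (n - k)).2 - (g (m - k)).2 := by
    intro k
    induction k with
    | zero => intro _; simp [hfn, hgn]; omega
    | succ k ih =>
      intro hk
      have hk' := ih (by omega)
      have h1 : n - k = (n - (k+1)) + 1 := by omega
      have h2 : m - k = (m - (k+1)) + 1 := by omega
      have hf' := hfs (n - (k+1)) (by omega)
      have hg' := hgs (m - (k+1)) (by omega)
      rw [← h1] at hf'
      rw [← h2] at hg'
      -- the difference changes by at most one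
      have hne : (f (n - (k+1))).2 ≠ (g (m - (k+1))).2 := by
        intro heq
        have hfd := hdf (n - (k+1)) (by omega)
        have hgd := hdg (m - (k+1)) (by omega)
        have hx1 : (f (n - (k+1))).1 = (g (m - (k+1))).1 := by
          rw [heq] at hfd
          have : ((n - (k+1) : ℕ) : ℤ) = (n : ℤ) - (k+1) := by push_cast; omega
          rw [this] at hfd
          have : ((m - (k+1) : ℕ) : ℤ) = (m : ℤ) - (k+1) := by push_cast; omega
          rw [this] at hgd
          omega
        have hpt : f (n - (k+1)) = g (m - (k+1)) := Prod.ext hx1 heq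
        exact hd _ (hfm _ (by omega)) (hpt ▸ hgm _ (by omega))
      rcases hf' with h | h <;> rcases hg' with h' | h' <;>
        rw [h, h'] at hk' <;> simp at hk' <;> omega
  rcases le_or_gt m n with hmn | hnm
  · have := pos m (by omega)
    have h2 : (f (n - m)).2 ≤ (f 0).2 := snd_anti hfs 0 (n - m) (by omega) (by omega)
    rw [hf0] at h2
    simp [hg0] at this
    omega
  · have := pos n (by omega)
    simp [hf0] at this
    have h2 : (g 0).1 ≤ (g (m - n)).1 := fst_mono hgs 0 (m - n) (by omega) (by omega)
    rw [hg0] at h2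
    have hgd := hdg (m - n) (by omega)
    have : ((m - n : ℕ) : ℤ) = (m : ℤ) - n := by push_cast; omega
    rw [this] at hgd
    omega

/-- In the `p = 3` setting, a non-identity permutation realized by a triple of
pairwise non-intersecting paths must be the transposition `(12)` or `(23)`. -/
theorem only_adjacent_transpositions
    (mu : Fin 3 → ℤ) (hmu01 : mu 1 ≤ mu 0) (hmu12 : mu 2 ≤ mu 1) (hmu0 : 0 ≤ mu 2)
    (A : Fin 3 → ℤ × ℤ)
    (B : Fin 3 → ℤ × ℤ)
    (hB : ∀ r : Fin 3, B r = (mu r + 3 - (r : ℤ), mu r + 3 - (r : ℤ)))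
    (hNE1 : (A 2).1 < (A 0).1) (hNE2 : (A 2).2 < (A 0).2)
    (hN : (A 1).2 < (A 0).2)
    (w : Equiv.Perm (Fin 3)) (hw : w ≠ 1)
    (π : Fin 3 → List (ℤ × ℤ))
    (hπ : ∀ r, IsESPath (π r) (A (w r)) (B r))
    (hdisj : ∀ r s, r ≠ s → ∀ x ∈ π r, x ∉ π s) :
    w = Equiv.swap 0 1 ∨ w = Equiv.swap 1 2 := by
  have hc : ∀ v : Equiv.Perm (Fin 3), v = 1 ∨ v = Equiv.swap 0 1 ∨ v = Equiv.swap 1 2 ∨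
      v = Equiv.swap 0 2 ∨ v = Equiv.swap 0 1 * Equiv.swap 1 2 ∨
      v = Equiv.swap 1 2 * Equiv.swap 0 1 := by decide
  have c0 : ((0 : Fin 3) : ℤ) = 0 := by decide
  have c1 : ((1 : Fin 3) : ℤ) = 1 := by decide
  have c2 : ((2 : Fin 3) : ℤ) = 2 := by decide
  rcases hc w with h | h | h | h | h | h
  · exact absurd h hw
  · exact Or.inl h
  · exact Or.inr h
  · exfalso
    have e0 : w 0 = 2 := by rw [h]; decide
    have e2 : w 2 = 0 := by rw [h]; decide
    have h0 := hπ 0; rw [e0, hB 0] at h0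
    have h2 := hπ 2; rw [e2, hB 2] at h2
    exact no_cross (b := mu 0 + 3 - ((0 : Fin 3) : ℤ)) (b' := mu 2 + 3 - ((2 : Fin 3) : ℤ))
      (by rw [c0, c2]; omega) hNE1 hNE2 h0 h2 (hdisj 0 2 (by decide))
  · exfalso
    have e1 : w 1 = 2 := by rw [h]; decide
    have e2 : w 2 = 0 := by rw [h]; decide
    have h1 := hπ 1; rw [e1, hB 1] at h1
    have h2 := hπ 2; rw [e2, hB 2] at h2
    exact no_cross (b := mu 1 + 3 - ((1 : Fin 3) : ℤ)) (b' := mu 2 + 3 - ((2 : Fin 3) : ℤ))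
      (by rw [c1, c2]; omega) hNE1 hNE2 h1 h2 (hdisj 1 2 (by decide))
  · exfalso
    have e0 : w 0 = 2 := by rw [h]; decide
    have e1 : w 1 = 0 := by rw [h]; decide
    have h0 := hπ 0; rw [e0, hB 0] at h0
    have h1 := hπ 1; rw [e1, hB 1] at h1
    exact no_cross (b := mu 0 + 3 - ((0 : Fin 3) : ℤ)) (b' := mu 1 + 3 - ((1 : Fin 3) : ℤ))
      (by rw [c0, c1]; omega) hNE1 hNE2 h0 h1 (hdisj 0 1 (by decide))
end

section
/- For p=3 and partitions λ ⊇ μ (component-wise), the partial sum c(λ,μ;0) corresponding to (i,j,k)=(0,0,0) is strictly positive: det of the 3×3 matrix with entries C(λ_r, μ_c + r - c) (rows r, columns c, 1 ≤ r,c ≤ 3) is strictly positive when μ_r ≤ λ_r for all r. -/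
lemma pascal (n k : ℤ) (hn : 1 ≤ n) :
    ichoose n k = ichoose (n-1) k + ichoose (n-1) (k-1) := by
  unfold ichoose
  by_cases h1 : 0 ≤ k ∧ k ≤ n
  · by_cases h2 : 0 ≤ k ∧ k ≤ n - 1
    · by_cases h3 : 0 ≤ k - 1 ∧ k - 1 ≤ n - 1
      · rw [if_pos h1, if_pos h2, if_pos h3]
        have ha : n.toNat = (n-1).toNat + 1 := by omega
        have hb : k.toNat = (k-1).toNat + 1 := by omega
        rw [ha, hb, Nat.choose_succ_succ]
        push_cast
        ring
      · obtain rfl : k = 0 := by omega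
        rw [if_pos h1, if_pos h2, if_neg h3]
        norm_num
    · obtain rfl : k = n := by omega
      rw [if_pos h1, if_neg h2, if_pos ⟨by omega, by omega⟩]
      have ha : k.toNat = (k-1).toNat + 1 := by omega
      rw [ha]
      simp [Nat.choose_self, Nat.choose_succ_self_right]
  · rw [if_neg h1, if_neg (by omega : ¬(0 ≤ k ∧ k ≤ n-1)), if_neg (by omega : ¬(0 ≤ k-1 ∧ k-1 ≤ n-1))]
    norm_num

lemma ichoose_zero (k : ℤ) : ichoose 0 k = if k = 0 then 1 else 0 := by
  by_cases h : k = 0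
  · subst h; simp [ichoose]
  · unfold ichoose; rw [if_neg (by omega), if_neg h]

/-- 3x3 determinant of the matrix `(ichoose lᵣ (m_c + sᵣ - c))`. -/
def H (l1 l2 l3 s1 s2 s3 m1 m2 m3 : ℤ) : ℤ :=
    ichoose l1 (m1+s1-1) * ichoose l2 (m2+s2-2) * ichoose l3 (m3+s3-3)
  - ichoose l1 (m1+s1-1) * ichoose l2 (m3+s2-3) * ichoose l3 (m2+s3-2)
  - ichoose l1 (m2+s1-2) * ichoose l2 (m1+s2-1) * ichoose l3 (m3+s3-3)
  + ichoose l1 (m2+s1-2) * ichoose l2 (m3+s2-3) * ichoose l3 (m1+s3-1)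
  + ichoose l1 (m3+s1-3) * ichoose l2 (m1+s2-1) * ichoose l3 (m2+s3-2)
  - ichoose l1 (m3+s1-3) * ichoose l2 (m2+s2-2) * ichoose l3 (m1+s3-1)

lemma Hrow1 (l1 l2 l3 s1 s2 s3 m1 m2 m3 : ℤ) (h : 1 ≤ l1) :
    H l1 l2 l3 s1 s2 s3 m1 m2 m3 =
    H (l1-1) l2 l3 s1 s2 s3 m1 m2 m3 + H (l1-1) l2 l3 (s1-1) s2 s3 m1 m2 m3 := by
  have e1 : m1 + (s1-1) - 1 = m1 + s1 - 1 - 1 := by ring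
  have e2 : m2 + (s1-1) - 2 = m2 + s1 - 2 - 1 := by ring
  have e3 : m3 + (s1-1) - 3 = m3 + s1 - 3 - 1 := by ring
  simp only [H]
  rw [pascal l1 (m1+s1-1) h, pascal l1 (m2+s1-2) h, pascal l1 (m3+s1-3) h, e1, e2, e3]
  ring

lemma Hrow2 (l1 l2 l3 s1 s2 s3 m1 m2 m3 : ℤ) (h : 1 ≤ l2) :
    H l1 l2 l3 s1 s2 s3 m1 m2 m3 =
    H l1 (l2-1) l3 s1 s2 s3 m1 m2 m3 + H l1 (l2-1) l3 s1 (s2-1) s3 m1 m2 m3 := by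
  have e1 : m1 + (s2-1) - 1 = m1 + s2 - 1 - 1 := by ring
  have e2 : m2 + (s2-1) - 2 = m2 + s2 - 2 - 1 := by ring
  have e3 : m3 + (s2-1) - 3 = m3 + s2 - 3 - 1 := by ring
  simp only [H]
  rw [pascal l2 (m1+s2-1) h, pascal l2 (m2+s2-2) h, pascal l2 (m3+s2-3) h, e1, e2, e3]
  ring

lemma Hrow3 (l1 l2 l3 s1 s2 s3 m1 m2 m3 : ℤ) (h : 1 ≤ l3) :
    H l1 l2 l3 s1 s2 s3 m1 m2 m3 =
    H l1 l2 (l3-1) s1 s2 s3 m1 m2 m3 + H l1 l2 (l3-1) s1 s2 (s3-1) m1 m2 m3 := by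
  have e1 : m1 + (s3-1) - 1 = m1 + s3 - 1 - 1 := by ring
  have e2 : m2 + (s3-1) - 2 = m2 + s3 - 2 - 1 := by ring
  have e3 : m3 + (s3-1) - 3 = m3 + s3 - 3 - 1 := by ring
  simp only [H]
  rw [pascal l3 (m1+s3-1) h, pascal l3 (m2+s3-2) h, pascal l3 (m3+s3-3) h, e1, e2, e3]
  ring

lemma Hzero12 (l l3 s s3 m1 m2 m3 : ℤ) : H l l l3 s s s3 m1 m2 m3 = 0 := by
  simp only [H]; ring

lemma Hzero23 (l1 l s1 s m1 m2 m3 : ℤ) : H l1 l l s1 s s m1 m2 m3 = 0 := by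
  simp only [H]; ring

lemma Hbase0 (s1 s2 s3 m1 m2 m3 : ℤ) (hs12 : s1 < s2) (hs23 : s2 < s3)
    (hm12 : m2 ≤ m1) (hm23 : m3 ≤ m2) : 0 ≤ H 0 0 0 s1 s2 s3 m1 m2 m3 := by
  simp only [H, ichoose_zero]
  split_ifs <;> omega

lemma Hbase1 (m1 m2 m3 : ℤ) (hm12 : m2 ≤ m1) (hm23 : m3 ≤ m2) :
    H 0 0 0 (1-m1) (2-m2) (3-m3) m1 m2 m3 = 1 := by
  simp only [H, ichoose_zero]
  split_ifs <;> omega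

lemma Hnonneg : ∀ n : ℕ, ∀ l1 l2 l3 s1 s2 s3 m1 m2 m3 : ℤ,
    l1 + l2 + l3 ≤ (n : ℤ) →
    l2 ≤ l1 → l3 ≤ l2 → 0 ≤ l3 →
    s1 ≤ s2 → s2 ≤ s3 →
    (s1 = s2 → l1 = l2) → (s2 = s3 → l2 = l3) →
    m2 ≤ m1 → m3 ≤ m2 →
    0 ≤ H l1 l2 l3 s1 s2 s3 m1 m2 m3 := by
  intro n
  induction n with
  | zero =>
    intro l1 l2 l3 s1 s2 s3 m1 m2 m3 hsum h12 h23 h3 hs12 hs23 he1 he2 hm12 hm23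
    obtain rfl : l1 = 0 := by omega
    obtain rfl : l2 = 0 := by omega
    obtain rfl : l3 = 0 := by omega
    rcases eq_or_lt_of_le hs12 with hq | hq
    · subst hq; exact le_of_eq (Hzero12 0 0 s1 s3 m1 m2 m3).symm
    rcases eq_or_lt_of_le hs23 with hq2 | hq2
    · subst hq2; exact le_of_eq (Hzero23 0 0 s1 s2 m1 m2 m3).symm
    exact Hbase0 s1 s2 s3 m1 m2 m3 hq hq2 hm12 hm23
  | succ n ih =>
    intro l1 l2 l3 s1 s2 s3 m1 m2 m3 hsum h12 h23 h3 hs12 hs23 he1 he2 hm12 hm23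
    rcases eq_or_lt_of_le hs12 with hq | hs12'
    · subst hq
      obtain rfl : l1 = l2 := he1 rfl
      exact le_of_eq (Hzero12 l1 l3 s1 s3 m1 m2 m3).symm
    rcases eq_or_lt_of_le hs23 with hq2 | hs23'
    · subst hq2
      obtain rfl : l2 = l3 := he2 rfl
      exact le_of_eq (Hzero23 l1 l2 s1 s2 m1 m2 m3).symm
    by_cases hl12 : l2 < l1
    · rw [Hrow1 l1 l2 l3 s1 s2 s3 m1 m2 m3 (by omega)]
      have A := ih (l1-1) l2 l3 s1 s2 s3 m1 m2 m3 (by omega) (by omega) h23 h3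
        (by omega) (by omega) (by omega) (by omega) hm12 hm23
      have B := ih (l1-1) l2 l3 (s1-1) s2 s3 m1 m2 m3 (by omega) (by omega) h23 h3
        (by omega) (by omega) (by omega) (by omega) hm12 hm23
      linarith
    by_cases hl23 : l3 < l2
    · rw [show l1 = l2 by omega]
      rw [Hrow1 l2 l2 l3 s1 s2 s3 m1 m2 m3 (by omega),
          Hrow2 (l2-1) l2 l3 s1 s2 s3 m1 m2 m3 (by omega),
          Hrow2 (l2-1) l2 l3 (s1-1) s2 s3 m1 m2 m3 (by omega)]
      have A := ih (l2-1) (l2-1) l3 s1 s2 s3 m1 m2 m3 (by omega) (by omega) (by omega) h3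
        (by omega) (by omega) (by omega) (by omega) hm12 hm23
      have B := ih (l2-1) (l2-1) l3 s1 (s2-1) s3 m1 m2 m3 (by omega) (by omega) (by omega) h3
        (by omega) (by omega) (by omega) (by omega) hm12 hm23
      have C := ih (l2-1) (l2-1) l3 (s1-1) s2 s3 m1 m2 m3 (by omega) (by omega) (by omega) h3
        (by omega) (by omega) (by omega) (by omega) hm12 hm23
      have D := ih (l2-1) (l2-1) l3 (s1-1) (s2-1) s3 m1 m2 m3 (by omega) (by omega) (by omega) h3
        (by omega) (by omega) (by omega) (by omega) hm12 hm23
      linarith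
    by_cases hl3 : 0 < l3
    · rw [show l1 = l3 by omega, show l2 = l3 by omega]
      rw [Hrow1 l3 l3 l3 s1 s2 s3 m1 m2 m3 (by omega),
          Hrow2 (l3-1) l3 l3 s1 s2 s3 m1 m2 m3 (by omega),
          Hrow2 (l3-1) l3 l3 (s1-1) s2 s3 m1 m2 m3 (by omega),
          Hrow3 (l3-1) (l3-1) l3 s1 s2 s3 m1 m2 m3 (by omega),
          Hrow3 (l3-1) (l3-1) l3 s1 (s2-1) s3 m1 m2 m3 (by omega),
          Hrow3 (l3-1) (l3-1) l3 (s1-1) s2 s3 m1 m2 m3 (by omega),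
          Hrow3 (l3-1) (l3-1) l3 (s1-1) (s2-1) s3 m1 m2 m3 (by omega)]
      have A1 := ih (l3-1) (l3-1) (l3-1) s1 s2 s3 m1 m2 m3 (by omega) (by omega) (by omega)
        (by omega) (by omega) (by omega) (by omega) (by omega) hm12 hm23
      have A2 := ih (l3-1) (l3-1) (l3-1) s1 s2 (s3-1) m1 m2 m3 (by omega) (by omega) (by omega)
        (by omega) (by omega) (by omega) (by omega) (by omega) hm12 hm23
      have A3 := ih (l3-1) (l3-1) (l3-1) s1 (s2-1) s3 m1 m2 m3 (by omega) (by omega) (by omega)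
        (by omega) (by omega) (by omega) (by omega) (by omega) hm12 hm23
      have A4 := ih (l3-1) (l3-1) (l3-1) s1 (s2-1) (s3-1) m1 m2 m3 (by omega) (by omega) (by omega)
        (by omega) (by omega) (by omega) (by omega) (by omega) hm12 hm23
      have A5 := ih (l3-1) (l3-1) (l3-1) (s1-1) s2 s3 m1 m2 m3 (by omega) (by omega) (by omega)
        (by omega) (by omega) (by omega) (by omega) (by omega) hm12 hm23
      have A6 := ih (l3-1) (l3-1) (l3-1) (s1-1) s2 (s3-1) m1 m2 m3 (by omega) (by omega) (by omega)
        (by omega) (by omega) (by omega) (by omega) (by omega) hm12 hm23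
      have A7 := ih (l3-1) (l3-1) (l3-1) (s1-1) (s2-1) s3 m1 m2 m3 (by omega) (by omega) (by omega)
        (by omega) (by omega) (by omega) (by omega) (by omega) hm12 hm23
      have A8 := ih (l3-1) (l3-1) (l3-1) (s1-1) (s2-1) (s3-1) m1 m2 m3 (by omega) (by omega) (by omega)
        (by omega) (by omega) (by omega) (by omega) (by omega) hm12 hm23
      linarith
    · rw [show l1 = 0 by omega, show l2 = 0 by omega, show l3 = 0 by omega]
      exact Hbase0 s1 s2 s3 m1 m2 m3 hs12' hs23' hm12 hm23

lemma Hnn (l1 l2 l3 s1 s2 s3 m1 m2 m3 : ℤ)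
    (h12 : l2 ≤ l1) (h23 : l3 ≤ l2) (h3 : 0 ≤ l3)
    (hs12 : s1 ≤ s2) (hs23 : s2 ≤ s3)
    (he1 : s1 = s2 → l1 = l2) (he2 : s2 = s3 → l2 = l3)
    (hm12 : m2 ≤ m1) (hm23 : m3 ≤ m2) :
    0 ≤ H l1 l2 l3 s1 s2 s3 m1 m2 m3 :=
  Hnonneg (l1+l2+l3).toNat l1 l2 l3 s1 s2 s3 m1 m2 m3 (by omega)
    h12 h23 h3 hs12 hs23 he1 he2 hm12 hm23

lemma Hpos : ∀ n : ℕ, ∀ l1 l2 l3 s1 s2 s3 m1 m2 m3 : ℤ,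
    l1 + l2 + l3 ≤ (n : ℤ) →
    l2 ≤ l1 → l3 ≤ l2 → 0 ≤ l3 →
    s1 < s2 → s2 < s3 →
    m2 ≤ m1 → m3 ≤ m2 →
    0 ≤ s1 + m1 - 1 → s1 + m1 - 1 ≤ l1 →
    0 ≤ s2 + m2 - 2 → s2 + m2 - 2 ≤ l2 →
    0 ≤ s3 + m3 - 3 → s3 + m3 - 3 ≤ l3 →
    1 ≤ H l1 l2 l3 s1 s2 s3 m1 m2 m3 := by
  intro n
  induction n with
  | zero =>
    intro l1 l2 l3 s1 s2 s3 m1 m2 m3 hsum h12 h23 h3 hs12 hs23 hm12 hm23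
      hd1a hd1b hd2a hd2b hd3a hd3b
    obtain rfl : l1 = 0 := by omega
    obtain rfl : l2 = 0 := by omega
    obtain rfl : l3 = 0 := by omega
    obtain rfl : s1 = 1 - m1 := by omega
    obtain rfl : s2 = 2 - m2 := by omega
    obtain rfl : s3 = 3 - m3 := by omega
    exact (Hbase1 m1 m2 m3 hm12 hm23).ge
  | succ n ih =>
    intro l1 l2 l3 s1 s2 s3 m1 m2 m3 hsum h12 h23 h3 hs12 hs23 hm12 hm23
      hd1a hd1b hd2a hd2b hd3a hd3b
    by_cases hl12 : l2 < l1
    · rw [Hrow1 l1 l2 l3 s1 s2 s3 m1 m2 m3 (by omega)]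
      by_cases hd : 0 < s1 + m1 - 1
      · have A := Hnn (l1-1) l2 l3 s1 s2 s3 m1 m2 m3 (by omega) h23 h3 (by omega) (by omega)
          (by omega) (by omega) hm12 hm23
        have B := ih (l1-1) l2 l3 (s1-1) s2 s3 m1 m2 m3 (by omega) (by omega) h23 h3
          (by omega) hs23 hm12 hm23 (by omega) (by omega) hd2a hd2b hd3a hd3b
        linarith
      · have A := ih (l1-1) l2 l3 s1 s2 s3 m1 m2 m3 (by omega) (by omega) h23 h3
          hs12 hs23 hm12 hm23 hd1a (by omega) hd2a hd2b hd3a hd3b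
        have B := Hnn (l1-1) l2 l3 (s1-1) s2 s3 m1 m2 m3 (by omega) h23 h3 (by omega) (by omega)
          (by omega) (by omega) hm12 hm23
        linarith
    by_cases hl23 : l3 < l2
    · rw [show l1 = l2 by omega]
      rw [Hrow1 l2 l2 l3 s1 s2 s3 m1 m2 m3 (by omega),
          Hrow2 (l2-1) l2 l3 s1 s2 s3 m1 m2 m3 (by omega),
          Hrow2 (l2-1) l2 l3 (s1-1) s2 s3 m1 m2 m3 (by omega)]
      have A0 := Hnn (l2-1) (l2-1) l3 s1 s2 s3 m1 m2 m3 (by omega) (by omega) h3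
        (by omega) (by omega) (by omega) (by omega) hm12 hm23
      have B0 := Hnn (l2-1) (l2-1) l3 s1 (s2-1) s3 m1 m2 m3 (by omega) (by omega) h3
        (by omega) (by omega) (by omega) (by omega) hm12 hm23
      have C0 := Hnn (l2-1) (l2-1) l3 (s1-1) s2 s3 m1 m2 m3 (by omega) (by omega) h3
        (by omega) (by omega) (by omega) (by omega) hm12 hm23
      have D0 := Hnn (l2-1) (l2-1) l3 (s1-1) (s2-1) s3 m1 m2 m3 (by omega) (by omega) h3
        (by omega) (by omega) (by omega) (by omega) hm12 hm23
      by_cases hx1 : 0 < s1 + m1 - 1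
      · by_cases hx2 : 0 < s2 + m2 - 2
        · have X := ih (l2-1) (l2-1) l3 (s1-1) (s2-1) s3 m1 m2 m3 (by omega) (by omega)
            (by omega) h3 (by omega) (by omega) hm12 hm23
            (by omega) (by omega) (by omega) (by omega) hd3a hd3b
          linarith
        · have X := ih (l2-1) (l2-1) l3 (s1-1) s2 s3 m1 m2 m3 (by omega) (by omega)
            (by omega) h3 (by omega) hs23 hm12 hm23
            (by omega) (by omega) hd2a (by omega) hd3a hd3b
          linarith
      · by_cases hx2 : 0 < s2 + m2 - 2
        · have X := ih (l2-1) (l2-1) l3 s1 (s2-1) s3 m1 m2 m3 (by omega) (by omega)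
            (by omega) h3 (by omega) (by omega) hm12 hm23
            hd1a (by omega) (by omega) (by omega) hd3a hd3b
          linarith
        · have X := ih (l2-1) (l2-1) l3 s1 s2 s3 m1 m2 m3 (by omega) (by omega)
            (by omega) h3 hs12 hs23 hm12 hm23
            hd1a (by omega) hd2a (by omega) hd3a hd3b
          linarith
    by_cases hl3 : 0 < l3
    · rw [show l1 = l3 by omega, show l2 = l3 by omega]
      rw [Hrow1 l3 l3 l3 s1 s2 s3 m1 m2 m3 (by omega),
          Hrow2 (l3-1) l3 l3 s1 s2 s3 m1 m2 m3 (by omega),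
          Hrow2 (l3-1) l3 l3 (s1-1) s2 s3 m1 m2 m3 (by omega),
          Hrow3 (l3-1) (l3-1) l3 s1 s2 s3 m1 m2 m3 (by omega),
          Hrow3 (l3-1) (l3-1) l3 s1 (s2-1) s3 m1 m2 m3 (by omega),
          Hrow3 (l3-1) (l3-1) l3 (s1-1) s2 s3 m1 m2 m3 (by omega),
          Hrow3 (l3-1) (l3-1) l3 (s1-1) (s2-1) s3 m1 m2 m3 (by omega)]
      have A1 := Hnn (l3-1) (l3-1) (l3-1) s1 s2 s3 m1 m2 m3 (by omega) (by omega) (by omega)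
        (by omega) (by omega) (by omega) (by omega) hm12 hm23
      have A2 := Hnn (l3-1) (l3-1) (l3-1) s1 s2 (s3-1) m1 m2 m3 (by omega) (by omega) (by omega)
        (by omega) (by omega) (by omega) (by omega) hm12 hm23
      have A3 := Hnn (l3-1) (l3-1) (l3-1) s1 (s2-1) s3 m1 m2 m3 (by omega) (by omega) (by omega)
        (by omega) (by omega) (by omega) (by omega) hm12 hm23
      have A4 := Hnn (l3-1) (l3-1) (l3-1) s1 (s2-1) (s3-1) m1 m2 m3 (by omega) (by omega) (by omega)
        (by omega) (by omega) (by omega) (by omega) hm12 hm23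
      have A5 := Hnn (l3-1) (l3-1) (l3-1) (s1-1) s2 s3 m1 m2 m3 (by omega) (by omega) (by omega)
        (by omega) (by omega) (by omega) (by omega) hm12 hm23
      have A6 := Hnn (l3-1) (l3-1) (l3-1) (s1-1) s2 (s3-1) m1 m2 m3 (by omega) (by omega) (by omega)
        (by omega) (by omega) (by omega) (by omega) hm12 hm23
      have A7 := Hnn (l3-1) (l3-1) (l3-1) (s1-1) (s2-1) s3 m1 m2 m3 (by omega) (by omega) (by omega)
        (by omega) (by omega) (by omega) (by omega) hm12 hm23
      have A8 := Hnn (l3-1) (l3-1) (l3-1) (s1-1) (s2-1) (s3-1) m1 m2 m3 (by omega) (by omega)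
        (by omega) (by omega) (by omega) (by omega) (by omega) hm12 hm23
      by_cases hx1 : 0 < s1 + m1 - 1 <;> by_cases hx2 : 0 < s2 + m2 - 2 <;>
        by_cases hx3 : 0 < s3 + m3 - 3
      · have X := ih (l3-1) (l3-1) (l3-1) (s1-1) (s2-1) (s3-1) m1 m2 m3 (by omega) (by omega)
          (by omega) (by omega) (by omega) (by omega) hm12 hm23
          (by omega) (by omega) (by omega) (by omega) (by omega) (by omega)
        linarith
      · have X := ih (l3-1) (l3-1) (l3-1) (s1-1) (s2-1) s3 m1 m2 m3 (by omega) (by omega)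
          (by omega) (by omega) (by omega) (by omega) hm12 hm23
          (by omega) (by omega) (by omega) (by omega) hd3a (by omega)
        linarith
      · have X := ih (l3-1) (l3-1) (l3-1) (s1-1) s2 (s3-1) m1 m2 m3 (by omega) (by omega)
          (by omega) (by omega) (by omega) (by omega) hm12 hm23
          (by omega) (by omega) hd2a (by omega) (by omega) (by omega)
        linarith
      · have X := ih (l3-1) (l3-1) (l3-1) (s1-1) s2 s3 m1 m2 m3 (by omega) (by omega)
          (by omega) (by omega) (by omega) (by omega) hm12 hm23
          (by omega) (by omega) hd2a (by omega) hd3a (by omega)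
        linarith
      · have X := ih (l3-1) (l3-1) (l3-1) s1 (s2-1) (s3-1) m1 m2 m3 (by omega) (by omega)
          (by omega) (by omega) (by omega) (by omega) hm12 hm23
          hd1a (by omega) (by omega) (by omega) (by omega) (by omega)
        linarith
      · have X := ih (l3-1) (l3-1) (l3-1) s1 (s2-1) s3 m1 m2 m3 (by omega) (by omega)
          (by omega) (by omega) (by omega) (by omega) hm12 hm23
          hd1a (by omega) (by omega) (by omega) hd3a (by omega)
        linarith
      · have X := ih (l3-1) (l3-1) (l3-1) s1 s2 (s3-1) m1 m2 m3 (by omega) (by omega)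
          (by omega) (by omega) (by omega) (by omega) hm12 hm23
          hd1a (by omega) hd2a (by omega) (by omega) (by omega)
        linarith
      · have X := ih (l3-1) (l3-1) (l3-1) s1 s2 s3 m1 m2 m3 (by omega) (by omega)
          (by omega) (by omega) (by omega) (by omega) hm12 hm23
          hd1a (by omega) hd2a (by omega) hd3a (by omega)
        linarith
    · obtain rfl : l1 = 0 := by omega
      obtain rfl : l2 = 0 := by omega
      obtain rfl : l3 = 0 := by omega
      obtain rfl : s1 = 1 - m1 := by omega
      obtain rfl : s2 = 2 - m2 := by omega
      obtain rfl : s3 = 3 - m3 := by omega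
      exact (Hbase1 m1 m2 m3 hm12 hm23).ge

theorem det3_pos_of_sub
    (lam1 lam2 lam3 mu1 mu2 mu3 : ℤ)
    (hlam12 : lam2 ≤ lam1) (hlam23 : lam3 ≤ lam2) (hlam0 : 0 ≤ lam3)
    (hmu12 : mu2 ≤ mu1) (hmu23 : mu3 ≤ mu2) (hmu0 : 0 ≤ mu3)
    (h1 : mu1 ≤ lam1) (h2 : mu2 ≤ lam2) (h3 : mu3 ≤ lam3) :
    0 < Matrix.det !![ichoose lam1 mu1, ichoose lam1 (mu2 - 1), ichoose lam1 (mu3 - 2);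
                      ichoose lam2 (mu1 + 1), ichoose lam2 mu2, ichoose lam2 (mu3 - 1);
                      ichoose lam3 (mu1 + 2), ichoose lam3 (mu2 + 1), ichoose lam3 mu3] := by
  have key := Hpos (lam1+lam2+lam3).toNat lam1 lam2 lam3 1 2 3 mu1 mu2 mu3 (by omega)
    hlam12 hlam23 hlam0 (by omega) (by omega) hmu12 hmu23
    (by omega) (by omega) (by omega) (by omega) (by omega) (by omega)
  have eq : Matrix.det !![ichoose lam1 mu1, ichoose lam1 (mu2 - 1), ichoose lam1 (mu3 - 2);
      ichoose lam2 (mu1 + 1), ichoose lam2 mu2, ichoose lam2 (mu3 - 1);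
      ichoose lam3 (mu1 + 2), ichoose lam3 (mu2 + 1), ichoose lam3 mu3]
      = H lam1 lam2 lam3 1 2 3 mu1 mu2 mu3 := by
    rw [Matrix.det_fin_three]
    simp only [Matrix.cons_val', Matrix.cons_val_zero, Matrix.cons_val_one, Matrix.head_cons,
      Matrix.empty_val', Matrix.cons_val_fin_one, Matrix.head_fin_const, Matrix.cons_val_two,
      Matrix.tail_cons, Matrix.tail_val', Matrix.of_apply, Matrix.cons_val_two]
    simp only [H]
    rw [show mu1 + 1 - 1 = mu1 by ring, show mu2 + 1 - 2 = mu2 - 1 by ring,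
        show mu3 + 1 - 3 = mu3 - 2 by ring, show mu1 + 2 - 1 = mu1 + 1 by ring,
        show mu2 + 2 - 2 = mu2 by ring, show mu3 + 2 - 3 = mu3 - 1 by ring,
        show mu1 + 3 - 1 = mu1 + 2 by ring, show mu2 + 3 - 2 = mu2 + 1 by ring,
        show mu3 + 3 - 3 = mu3 by ring]
  rw [eq]
  linarith
end

section
/- Let π₁: A₁ → B₁ and π₂: A₂ → B₂ be East/South lattice paths with A₂ strictly South of A₁ (y_{A₂} < y_{A₁}), and suppose π₁ and π₂ are non-intersecting and that a triple realizes the transposition swapping the two endpoints. If the horizontal line through A₂ meets π₁ at a point A₂* at horizontal distance l, then the horizontal swap (chopping π₁ at A₂* and translating the head by l) produces two non-intersecting paths π₁*: A₁* → B₂' and π₂*: A₂* → B₁' with A₁* = A₁ translated horizontally by ±l and the combined multiset of steps preserved. -/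
/-- The multiset of steps (difference vectors between consecutive points) of a path. -/
def pathSteps (P : List (ℤ × ℤ)) : Multiset (ℤ × ℤ) :=
  ↑(List.zipWith (fun p q : ℤ × ℤ => (q.1 - p.1, q.2 - p.2)) P P.tail)

abbrev ESStep (p q : ℤ × ℤ) : Prop := q = (p.1 + 1, p.2) ∨ q = (p.1, p.2 - 1)

lemma es_head_le (P : List (ℤ × ℤ)) (h : List.Chain' ESStep P) (a : ℤ × ℤ)
    (ha : P.head? = some a) : ∀ q ∈ P, a.1 ≤ q.1 ∧ q.2 ≤ a.2 := by
  induction P generalizing a with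
  | nil => simp at ha
  | cons b P ih =>
    simp only [List.head?_cons, Option.some_inj] at ha
    subst ha
    intro q hq
    rcases List.mem_cons.mp hq with rfl | hq
    · exact ⟨le_refl _, le_refl _⟩
    · cases P with
      | nil => simp at hq
      | cons c P =>
        have hbc : ESStep b c := (List.isChain_cons_cons.mp h).1
        have h' := (List.isChain_cons_cons.mp h).2
        have := ih h' c rfl q hq
        rcases hbc with rfl | rfl <;> simp at this ⊢ <;> omega

lemma es_last_le (P : List (ℤ × ℤ)) (h : List.Chain' ESStep P) (b : ℤ × ℤ)
    (hb : P.getLast? = some b) : ∀ q ∈ P, q.1 ≤ b.1 ∧ b.2 ≤ q.2 := by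
  induction P generalizing b with
  | nil => simp at hb
  | cons a P ih =>
    intro q hq
    cases P with
    | nil =>
      simp at hb hq
      subst hb; subst hq; exact ⟨le_refl _, le_refl _⟩
    | cons c P =>
      have hac : ESStep a c := (List.isChain_cons_cons.mp h).1
      have h' := (List.isChain_cons_cons.mp h).2
      have hb' : (c :: P).getLast? = some b := by
        rw [← hb]; symm; exact List.getLast?_cons_cons ..
      rcases List.mem_cons.mp hq with rfl | hq
      · have := ih h' b hb' c (List.mem_cons_self ..)
        rcases hac with rfl | rfl <;> simp at this ⊢ <;> omega
      · exact ih h' b hb' q hq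

-- strictness of antidiagonal along tail
lemma es_tail_gt (a : ℤ × ℤ) (P : List (ℤ × ℤ)) (h : List.Chain' ESStep (a :: P)) :
    ∀ q ∈ P, a.1 - a.2 < q.1 - q.2 := by
  intro q hq
  cases P with
  | nil => simp at hq
  | cons c P =>
    have hac : ESStep a c := (List.isChain_cons_cons.mp h).1
    have h' := (List.isChain_cons_cons.mp h).2
    have := es_head_le (c :: P) h' c rfl q hq
    rcases hac with rfl | rfl <;> simp at this ⊢ <;> omega

lemma es_mono (P : List (ℤ × ℤ)) (h : List.Chain' ESStep P) (p q : ℤ × ℤ)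
    (hp : p ∈ P) (hq : q ∈ P) (hd : p.1 - p.2 ≤ q.1 - q.2) :
    p.1 ≤ q.1 ∧ q.2 ≤ p.2 := by
  induction P with
  | nil => simp at hp
  | cons a P ih =>
    rcases List.mem_cons.mp hp with rfl | hp
    · exact es_head_le (p :: P) h p rfl q hq
    · rcases List.mem_cons.mp hq with rfl | hq'
      · exact absurd hd (by have := es_tail_gt q P h p (by assumption); omega)
      · exact ih h.tail (by assumption) hq'

lemma es_unique (P : List (ℤ × ℤ)) (h : List.Chain' ESStep P) (p q : ℤ × ℤ)
    (hp : p ∈ P) (hq : q ∈ P) (hd : p.1 - p.2 = q.1 - q.2) : p = q := by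
  have h1 := es_mono P h p q hp hq (le_of_eq hd)
  have h2 := es_mono P h q p hq hp (ge_of_eq hd)
  have : p.1 = q.1 := le_antisymm h1.1 h2.1
  exact Prod.ext this (by omega)

lemma es_succ (P : List (ℤ × ℤ)) (h : List.Chain' ESStep P) (p q : ℤ × ℤ)
    (hp : p ∈ P) (hq : q ∈ P) (hd : p.1 - p.2 < q.1 - q.2) :
    ∃ r ∈ P, ESStep p r := by
  induction P with
  | nil => simp at hp
  | cons a P ih =>
    rcases List.mem_cons.mp hp with rfl | hp
    · cases P with
      | nil => simp at hq; subst hq; omega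
      | cons c P =>
        exact ⟨c, List.mem_cons_of_mem _ (List.mem_cons_self ..), (List.isChain_cons_cons.mp h).1⟩
    · rcases List.mem_cons.mp hq with rfl | hq'
      · exact absurd hd (by have := es_tail_gt q P h p (by assumption); omega)
      · obtain ⟨r, hr, hs⟩ := ih h.tail (by assumption) hq'
        exact ⟨r, List.mem_cons_of_mem _ hr, hs⟩

lemma es_ivt (P : List (ℤ × ℤ)) (h : List.Chain' ESStep P) (p q : ℤ × ℤ)
    (hp : p ∈ P) (hq : q ∈ P) (d : ℤ) (h1 : p.1 - p.2 ≤ d) (h2 : d ≤ q.1 - q.2) :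
    ∃ r ∈ P, r.1 - r.2 = d := by
  have key : ∀ n : ℕ, ∀ p ∈ P, p.1 - p.2 ≤ d → d - (p.1 - p.2) = n → ∃ r ∈ P, r.1 - r.2 = d := by
    intro n
    induction n with
    | zero => intro p hp h1 h0; exact ⟨p, hp, by omega⟩
    | succ n ihn =>
      intro p hp h1 hn
      obtain ⟨r, hr, hs⟩ := es_succ P h p q hp hq (by omega)
      apply ihn r hr <;> rcases hs with rfl | rfl <;> simp <;> omega
  exact key (d - (p.1 - p.2)).toNat p hp h1 (by omega)

lemma es_compare (P₁ P₂ : List (ℤ × ℤ)) (h₁ : List.Chain' ESStep P₁)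
    (h₂ : List.Chain' ESStep P₂) (hdisj : ∀ x ∈ P₁, x ∉ P₂)
    (p₁ p₂ : ℤ × ℤ) (hp₁ : p₁ ∈ P₁) (hp₂ : p₂ ∈ P₂)
    (hdd : p₁.1 - p₁.2 = p₂.1 - p₂.2) (hx : p₁.1 < p₂.1) :
    ∀ q₁ ∈ P₁, ∀ q₂ ∈ P₂, q₁.1 - q₁.2 = q₂.1 - q₂.2 →
      p₁.1 - p₁.2 ≤ q₁.1 - q₁.2 → q₁.1 < q₂.1 := by
  have key : ∀ n : ℕ, ∀ q₁ ∈ P₁, ∀ q₂ ∈ P₂, q₁.1 - q₁.2 = q₂.1 - q₂.2 →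
      p₁.1 - p₁.2 ≤ q₁.1 - q₁.2 → (q₁.1 - q₁.2) - (p₁.1 - p₁.2) = n → q₁.1 < q₂.1 := by
    intro n
    induction n with
    | zero =>
      intro q₁ hq₁ q₂ hq₂ hdq hle h0
      have e1 : q₁ = p₁ := es_unique P₁ h₁ q₁ p₁ hq₁ hp₁ (by omega)
      have e2 : q₂ = p₂ := es_unique P₂ h₂ q₂ p₂ hq₂ hp₂ (by omega)
      rw [e1, e2]; exact hx
    | succ n ihn =>
      intro q₁ hq₁ q₂ hq₂ hdq hle hn
      obtain ⟨r₁, hr₁, hdr₁⟩ := es_ivt P₁ h₁ p₁ q₁ hp₁ hq₁ (q₁.1 - q₁.2 - 1) (by omega) (by omega)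
      obtain ⟨r₂, hr₂, hdr₂⟩ := es_ivt P₂ h₂ p₂ q₂ hp₂ hq₂ (q₂.1 - q₂.2 - 1) (by omega) (by omega)
      have hrlt : r₁.1 < r₂.1 := ihn r₁ hr₁ r₂ hr₂ (by omega) (by omega) (by omega)
      have l1 := es_mono P₁ h₁ r₁ q₁ hr₁ hq₁ (by omega)
      have l2 := es_mono P₂ h₂ r₂ q₂ hr₂ hq₂ (by omega)
      have hne : q₁.1 ≠ q₂.1 := by
        intro he
        exact hdisj q₁ hq₁ (by rwa [show q₁ = q₂ from Prod.ext he (by omega)])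
      omega
  intro q₁ hq₁ q₂ hq₂ hdq hle
  exact key ((q₁.1 - q₁.2) - (p₁.1 - p₁.2)).toNat q₁ hq₁ q₂ hq₂ hdq hle (by omega)

def eastP (A : ℤ × ℤ) : ℕ → List (ℤ × ℤ)
  | 0 => [A]
  | n+1 => A :: eastP (A.1 + 1, A.2) n

def southP (A : ℤ × ℤ) : ℕ → List (ℤ × ℤ)
  | 0 => [A]
  | n+1 => A :: southP (A.1, A.2 - 1) n

lemma getLast?_cons_ne {α : Type*} (a : α) (l : List α) (h : l ≠ []) :
    (a :: l).getLast? = l.getLast? := by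
  obtain ⟨b, t, rfl⟩ := List.exists_cons_of_ne_nil h
  exact List.getLast?_cons_cons ..

lemma eastP_path (A : ℤ × ℤ) (n : ℕ) : IsESPath (eastP A n) A (A.1 + n, A.2) := by
  induction n generalizing A with
  | zero => exact ⟨by simp [eastP], by simp [eastP], by simp [eastP], by simp [eastP, List.Chain']⟩
  | succ n ih =>
    obtain ⟨h1, h2, h3, h4⟩ := ih (A.1 + 1, A.2)
    refine ⟨by simp [eastP], by simp [eastP], ?_, ?_⟩
    · rw [eastP, getLast?_cons_ne _ _ h1, h3]
      congr 2; push_cast; ring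
    · rw [eastP, List.Chain', List.isChain_cons]
      refine ⟨fun y hy => ?_, h4⟩
      rw [Option.mem_def, h2, Option.some_inj] at hy
      subst hy; left; rfl

lemma southP_path (A : ℤ × ℤ) (n : ℕ) : IsESPath (southP A n) A (A.1, A.2 - n) := by
  induction n generalizing A with
  | zero => exact ⟨by simp [southP], by simp [southP], by simp [southP], by simp [southP, List.Chain']⟩
  | succ n ih =>
    obtain ⟨h1, h2, h3, h4⟩ := ih (A.1, A.2 - 1)
    refine ⟨by simp [southP], by simp [southP], ?_, ?_⟩
    · rw [southP, getLast?_cons_ne _ _ h1, h3]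
      congr 2; push_cast; ring
    · rw [southP, List.Chain', List.isChain_cons]
      refine ⟨fun y hy => ?_, h4⟩
      rw [Option.mem_def, h2, Option.some_inj] at hy
      subst hy; right; rfl

lemma eastP_mem (A : ℤ × ℤ) (n : ℕ) (x : ℤ × ℤ) :
    x ∈ eastP A n ↔ x.2 = A.2 ∧ A.1 ≤ x.1 ∧ x.1 ≤ A.1 + n := by
  induction n generalizing A with
  | zero =>
    simp [eastP]
    constructor
    · rintro rfl; omega
    · rintro ⟨h1, h2, h3⟩; exact Prod.ext (by omega) h1
  | succ n ih =>
    simp only [eastP, List.mem_cons, ih (A.1 + 1, A.2)]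
    constructor
    · rintro (rfl | ⟨h1, h2, h3⟩) <;> simp_all <;> push_cast at * <;> omega
    · rintro ⟨h1, h2, h3⟩
      rcases eq_or_lt_of_le h2 with he | hlt
      · exact Or.inl (Prod.ext he.symm h1)
      · exact Or.inr ⟨h1, by simpa using hlt, by push_cast at *; omega⟩

lemma southP_mem (A : ℤ × ℤ) (n : ℕ) (x : ℤ × ℤ) :
    x ∈ southP A n ↔ x.1 = A.1 ∧ A.2 - n ≤ x.2 ∧ x.2 ≤ A.2 := by
  induction n generalizing A with
  | zero =>
    simp [southP]
    constructor
    · rintro rfl; omega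
    · rintro ⟨h1, h2, h3⟩; exact Prod.ext h1 (by omega)
  | succ n ih =>
    simp only [southP, List.mem_cons, ih (A.1, A.2 - 1)]
    constructor
    · rintro (rfl | ⟨h1, h2, h3⟩) <;> simp_all <;> push_cast at * <;> omega
    · rintro ⟨h1, h2, h3⟩
      rcases eq_or_lt_of_le h3 with he | hlt
      · exact Or.inl (Prod.ext h1 he)
      · exact Or.inr ⟨h1, by push_cast at *; omega, by omega⟩

lemma pathSteps_cons_cons (a b : ℤ × ℤ) (L : List (ℤ × ℤ)) :
    pathSteps (a :: b :: L) = (b.1 - a.1, b.2 - a.2) ::ₘ pathSteps (b :: L) := rfl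

lemma eastP_steps (A : ℤ × ℤ) (n : ℕ) :
    pathSteps (eastP A n) = Multiset.replicate n (1, 0) := by
  induction n generalizing A with
  | zero => simp [eastP, pathSteps]
  | succ n ih =>
    rw [eastP, Multiset.replicate_succ]
    cases n with
    | zero => simp [eastP, pathSteps]
    | succ m =>
      rw [show eastP (A.1+1, A.2) (m+1) = (A.1+1, A.2) :: eastP (A.1+2, A.2) m by
        simp [eastP]; congr 1; ring, pathSteps_cons_cons]
      have := ih (A.1 + 1, A.2)
      rw [show eastP (A.1+1, A.2) (m+1) = (A.1+1, A.2) :: eastP (A.1+2, A.2) m by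
        simp [eastP]; congr 1; ring] at this
      rw [this]
      congr 1
      simp

lemma southP_steps (A : ℤ × ℤ) (n : ℕ) :
    pathSteps (southP A n) = Multiset.replicate n (0, -1) := by
  induction n generalizing A with
  | zero => simp [southP, pathSteps]
  | succ n ih =>
    rw [southP, Multiset.replicate_succ]
    cases n with
    | zero => simp [southP, pathSteps]
    | succ m =>
      rw [show southP (A.1, A.2-1) (m+1) = (A.1, A.2-1) :: southP (A.1, A.2-2) m by
        simp [southP]; congr 1; ring, pathSteps_cons_cons]
      have := ih (A.1, A.2 - 1)
      rw [show southP (A.1, A.2-1) (m+1) = (A.1, A.2-1) :: southP (A.1, A.2-2) m by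
        simp [southP]; congr 1; ring] at this
      rw [this]
      congr 1
      simp

lemma glue_path (P Q : List (ℤ × ℤ)) (A C B : ℤ × ℤ)
    (hP : IsESPath P A C) (hQ : IsESPath Q C B) :
    IsESPath (P ++ Q.tail) A B := by
  obtain ⟨hP1, hP2, hP3, hP4⟩ := hP
  obtain ⟨hQ1, hQ2, hQ3, hQ4⟩ := hQ
  obtain ⟨t, rfl⟩ : ∃ t, Q = C :: t := by
    cases Q with
    | nil => simp at hQ2
    | cons a t => simp at hQ2; exact ⟨t, by rw [hQ2]⟩
  refine ⟨by simp [hP1], by rw [List.head?_append_of_ne_nil _ hP1]; exact hP2, ?_, ?_⟩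
  · cases t with
    | nil => simpa using hP3.trans (by simpa using hQ3)
    | cons b t' =>
      rw [List.getLast?_append]
      simp only [List.tail_cons]
      rw [show (b :: t').getLast? = (C :: b :: t').getLast? from (List.getLast?_cons_cons ..).symm, hQ3]
      simp
  · rw [List.Chain', List.isChain_append]
    refine ⟨hP4, hQ4.tail, ?_⟩
    intro x hx y hy
    rw [hP3] at hx
    simp only [Option.mem_def, Option.some_inj] at hx
    subst hx
    cases t with
    | nil => simp at hy
    | cons b t' =>
      simp only [List.tail_cons, List.head?_cons, Option.mem_def, Option.some_inj] at hy
      subst hy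
      exact (List.isChain_cons_cons.mp hQ4).1

lemma glue_steps (Q : List (ℤ × ℤ)) (C : ℤ × ℤ) (hQ : Q.head? = some C) :
    ∀ P : List (ℤ × ℤ), P.getLast? = some C →
      pathSteps (P ++ Q.tail) = pathSteps P + pathSteps Q := by
  obtain ⟨t, rfl⟩ : ∃ t, Q = C :: t := by
    cases Q with
    | nil => simp at hQ
    | cons a t => simp at hQ; exact ⟨t, by rw [hQ]⟩
  intro P
  induction P with
  | nil => simp
  | cons a P ih =>
    intro hP
    cases P with
    | nil =>
      simp only [List.getLast?_singleton, Option.some_inj] at hP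
      subst hP
      simp [pathSteps]
    | cons b P =>
      have hP' : (b :: P).getLast? = some C := by
        rw [← hP]; symm; exact List.getLast?_cons_cons ..
      have := ih hP'
      rw [List.cons_append, List.cons_append, pathSteps_cons_cons,
        show pathSteps (b :: (P ++ (C :: t).tail)) = pathSteps (b :: P ++ (C :: t).tail) from rfl,
        this, pathSteps_cons_cons]
      simp [Multiset.cons_add]

lemma es_path_steps (P : List (ℤ × ℤ)) : ∀ A B : ℤ × ℤ, IsESPath P A B →
    pathSteps P = Multiset.replicate (B.1 - A.1).toNat (1, 0)
      + Multiset.replicate (A.2 - B.2).toNat (0, -1) := by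
  induction P with
  | nil => intro A B h; exact absurd rfl h.1
  | cons a P ih =>
    intro A B h
    obtain ⟨h1, h2, h3, h4⟩ := h
    simp only [List.head?_cons, Option.some_inj] at h2
    subst h2
    cases P with
    | nil =>
      simp only [List.getLast?_singleton, Option.some_inj] at h3
      subst h3
      simp [pathSteps]
    | cons b P =>
      have h3' : (b :: P).getLast? = some B := by
        rw [← h3]; symm; exact List.getLast?_cons_cons ..
      have hstep : ESStep a b := (List.isChain_cons_cons.mp h4).1
      have h4' := (List.isChain_cons_cons.mp h4).2
      have hrec := ih b B ⟨by simp, rfl, h3', h4'⟩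
      have hBmem : B ∈ b :: P := List.mem_of_getLast? h3'
      have hhead : b.1 ≤ B.1 ∧ B.2 ≤ b.2 := es_head_le _ h4' b rfl B hBmem
      rw [pathSteps_cons_cons, hrec]
      rcases hstep with rfl | rfl
      · simp only []
        rw [show (B.1 - a.1).toNat = (B.1 - (a.1+1, a.2).1).toNat + 1 by simp at hhead ⊢; omega,
          Multiset.replicate_succ]
        simp [Multiset.cons_add]
      · simp only []
        rw [show (a.2 - B.2).toNat = ((a.1, a.2-1).2 - B.2).toNat + 1 by simp at hhead ⊢; omega,
          Multiset.replicate_succ]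
        rw [Multiset.add_cons]
        congr 1
        simp

lemma rep_rearrange (a b c d a' b' c' d' : ℕ) (u v : ℤ × ℤ)
    (h1 : a + c = a' + c') (h2 : b + d = b' + d') :
    Multiset.replicate a u + Multiset.replicate b v
        + (Multiset.replicate d v + Multiset.replicate c u)
      = Multiset.replicate a' u + Multiset.replicate b' v
        + (Multiset.replicate c' u + Multiset.replicate d' v) := by
  calc Multiset.replicate a u + Multiset.replicate b v
        + (Multiset.replicate d v + Multiset.replicate c u)
      = Multiset.replicate (a + c) u + Multiset.replicate (b + d) v := by
        rw [Multiset.replicate_add, Multiset.replicate_add]; abel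
    _ = Multiset.replicate (a' + c') u + Multiset.replicate (b' + d') v := by rw [h1, h2]
    _ = _ := by rw [Multiset.replicate_add, Multiset.replicate_add]; abel

/-- The horizontal swap: from a non-intersecting pair of paths realizing the
transposition of the endpoints `B₁, B₂`, with `A₂` strictly South of `A₁` and the
horizontal line through `A₂` first meeting `π₁` at distance `l` (at the point
`A₂* = (A₂.1 - l, A₂.2)`), one produces a non-intersecting pair of paths
`π₁* : A₁* → B₁` and `π₂* : A₂* → B₂`, where `A₁*` is `A₁` translated
horizontally by `l`, with the combined multiset of steps preserved. -/
theorem horizontal_swap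
    (A₁ A₂ B₁ B₂ : ℤ × ℤ) (π₁ π₂ : List (ℤ × ℤ))
    (hπ₁ : IsESPath π₁ A₁ B₂) (hπ₂ : IsESPath π₂ A₂ B₁)
    (hS : A₂.2 < A₁.2)
    (hdisj : ∀ x ∈ π₁, x ∉ π₂)
    (l : ℤ) (hl0 : 0 ≤ l)
    (hhit : ((A₂.1 - l, A₂.2) : ℤ × ℤ) ∈ π₁)
    (hfirst : ∀ t : ℤ, 0 ≤ t → t < l → ((A₂.1 - t, A₂.2) : ℤ × ℤ) ∉ π₁) :
    ∃ σ₁ σ₂ : List (ℤ × ℤ),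
      IsESPath σ₁ (A₁.1 + l, A₁.2) B₁ ∧
      IsESPath σ₂ (A₂.1 - l, A₂.2) B₂ ∧
      (∀ x ∈ σ₁, x ∉ σ₂) ∧
      pathSteps σ₁ + pathSteps σ₂ = pathSteps π₁ + pathSteps π₂ := by
  obtain ⟨hn1, hh1, hl1, hc1⟩ := hπ₁
  obtain ⟨hn2, hh2, hl2, hc2⟩ := hπ₂
  have hA2mem : A₂ ∈ π₂ := List.mem_of_mem_head? (by rw [hh2]; rfl)
  have hB2mem : B₂ ∈ π₁ := List.mem_of_getLast? hl1
  have hB1mem : B₁ ∈ π₂ := List.mem_of_getLast? hl2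
  have f1 := es_head_le π₁ hc1 A₁ hh1 _ hhit
  have f2 := es_last_le π₁ hc1 B₂ hl1 _ hhit
  have f3 := es_last_le π₂ hc2 B₁ hl2 A₂ hA2mem
  dsimp only at f1 f2
  have hlpos : 0 < l := by
    rcases eq_or_lt_of_le hl0 with rfl | h
    · exact absurd hA2mem (hdisj A₂ (by simpa using hhit))
    · exact h
  have he1 : A₁.1 + l ≤ B₁.1 := by omega
  have hs1 : B₁.2 ≤ A₁.2 := by omega
  have he2 : A₂.1 - l ≤ B₂.1 := f2.1
  have hs2 : B₂.2 ≤ A₂.2 := f2.2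
  refine ⟨eastP (A₁.1 + l, A₁.2) (B₁.1 - (A₁.1 + l)).toNat
        ++ (southP (B₁.1, A₁.2) (A₁.2 - B₁.2).toNat).tail,
      southP (A₂.1 - l, A₂.2) (A₂.2 - B₂.2).toNat
        ++ (eastP (A₂.1 - l, B₂.2) (B₂.1 - (A₂.1 - l)).toNat).tail, ?_, ?_, ?_, ?_⟩
  · have h1 := eastP_path (A₁.1 + l, A₁.2) (B₁.1 - (A₁.1 + l)).toNat
    have h2 := southP_path (B₁.1, A₁.2) (A₁.2 - B₁.2).toNat
    rw [show ((A₁.1 + l, A₁.2).1 + ((B₁.1 - (A₁.1 + l)).toNat : ℤ), (A₁.1 + l, A₁.2).2)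
        = ((B₁.1, A₁.2) : ℤ × ℤ) by dsimp only; rw [Prod.mk.injEq]; omega] at h1
    have h3 := glue_path _ _ _ _ _ h1 h2
    rwa [show (((B₁.1, A₁.2) : ℤ × ℤ).1, ((B₁.1, A₁.2) : ℤ × ℤ).2 - ((A₁.2 - B₁.2).toNat : ℤ))
        = B₁ by dsimp only; rw [Prod.mk.injEq]; omega] at h3
  · have h1 := southP_path (A₂.1 - l, A₂.2) (A₂.2 - B₂.2).toNat
    have h2 := eastP_path (A₂.1 - l, B₂.2) (B₂.1 - (A₂.1 - l)).toNat
    rw [show ((A₂.1 - l, A₂.2).1, (A₂.1 - l, A₂.2).2 - ((A₂.2 - B₂.2).toNat : ℤ))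
        = ((A₂.1 - l, B₂.2) : ℤ × ℤ) by dsimp only; rw [Prod.mk.injEq]; omega] at h1
    have h3 := glue_path _ _ _ _ _ h1 h2
    rwa [show (((A₂.1 - l, B₂.2) : ℤ × ℤ).1 + ((B₂.1 - (A₂.1 - l)).toNat : ℤ),
        ((A₂.1 - l, B₂.2) : ℤ × ℤ).2) = B₂ by dsimp only; rw [Prod.mk.injEq]; omega] at h3
  · intro x hx1 hx2
    have hx1' : x ∈ eastP (A₁.1 + l, A₁.2) (B₁.1 - (A₁.1 + l)).toNat
        ∨ x ∈ southP (B₁.1, A₁.2) (A₁.2 - B₁.2).toNat := by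
      rcases List.mem_append.mp hx1 with h | h
      · exact Or.inl h
      · exact Or.inr (List.mem_of_mem_tail h)
    have hx2' : x ∈ southP (A₂.1 - l, A₂.2) (A₂.2 - B₂.2).toNat
        ∨ x ∈ eastP (A₂.1 - l, B₂.2) (B₂.1 - (A₂.1 - l)).toNat := by
      rcases List.mem_append.mp hx2 with h | h
      · exact Or.inl h
      · exact Or.inr (List.mem_of_mem_tail h)
    rw [eastP_mem, southP_mem] at hx1'
    rw [eastP_mem, southP_mem] at hx2'
    dsimp only at hx1' hx2'
    have hxy : x.2 ≤ A₂.2 := by omega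
    have hx1'' : x.1 = B₁.1 ∧ B₁.2 ≤ x.2 := by omega
    rcases hx2' with hA | hB
    · omega
    · -- collision: B₁.1 ≤ B₂.1 and B₁.2 ≤ B₂.2
      have hcol1 : B₁.1 ≤ B₂.1 := by omega
      have hcol2 : B₁.2 ≤ B₂.2 := by omega
      have hd2B2 : A₂.1 - A₂.2 ≤ B₂.1 - B₂.2 := by omega
      obtain ⟨p₁, hp₁, hdp₁⟩ := es_ivt π₁ hc1 _ B₂ hhit hB2mem (A₂.1 - A₂.2)
        (by dsimp only; omega) hd2B2
      have hp₁le := es_mono π₁ hc1 _ p₁ hhit hp₁ (by dsimp only; omega)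
      dsimp only at hp₁le
      have hp₁lt : p₁.1 < A₂.1 := by
        rcases lt_or_eq_of_le (show p₁.1 ≤ A₂.1 by omega) with h | h
        · exact h
        · exact absurd hA2mem (by
            rw [show A₂ = p₁ from (Prod.ext h (by omega)).symm]
            exact hdisj p₁ hp₁)
      have hcomp := es_compare π₁ π₂ hc1 hc2 hdisj p₁ A₂ hp₁ hA2mem (by omega) hp₁lt
      by_cases hcase : B₂.1 - B₂.2 ≤ B₁.1 - B₁.2
      · obtain ⟨q₂, hq₂, hdq₂⟩ := es_ivt π₂ hc2 A₂ B₁ hA2mem hB1mem (B₂.1 - B₂.2)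
          hd2B2 hcase
        have hlt := hcomp B₂ hB2mem q₂ hq₂ (by omega) (by omega)
        have hle := es_last_le π₂ hc2 B₁ hl2 q₂ hq₂
        omega
      · obtain ⟨q₁, hq₁, hdq₁⟩ := es_ivt π₁ hc1 _ B₂ hhit hB2mem (B₁.1 - B₁.2)
          (by dsimp only; omega) (by omega)
        have hlt := hcomp q₁ hq₁ B₁ hB1mem (by omega) (by omega)
        have hle := es_last_le π₁ hc1 B₂ hl1 q₁ hq₁
        omega
  · rw [glue_steps _ _ (southP_path (B₁.1, A₁.2) (A₁.2 - B₁.2).toNat).2.1 _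
        (by rw [(eastP_path (A₁.1 + l, A₁.2) (B₁.1 - (A₁.1 + l)).toNat).2.2.1]
            dsimp only; rw [Option.some_inj, Prod.mk.injEq]; omega),
      glue_steps _ _ (eastP_path (A₂.1 - l, B₂.2) (B₂.1 - (A₂.1 - l)).toNat).2.1 _
        (by rw [(southP_path (A₂.1 - l, A₂.2) (A₂.2 - B₂.2).toNat).2.2.1]
            dsimp only; rw [Option.some_inj, Prod.mk.injEq]; omega),
      eastP_steps, southP_steps, eastP_steps, southP_steps,
      es_path_steps π₁ A₁ B₂ ⟨hn1, hh1, hl1, hc1⟩,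
      es_path_steps π₂ A₂ B₁ ⟨hn2, hh2, hl2, hc2⟩]
    exact rep_rearrange _ _ _ _ _ _ _ _ _ _ (by omega) (by omega)
end
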